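/- arXiv:2402.04521 — 7 statements merged into one kernel-verified Lean document; each statement's English description precedes it below -/
import Mathlib

section
/- Let n ≥ 2 be an integer and C ∈ (0, π/2). Let v : (C, π−C) → ℝ be a differentiable function whose derivative is v'(x) = ((sin x / sin C)^{2(n−1)} − 1)^{−1/2} for all x ∈ (C, π−C). Then v is twice differentiable and satisfies the minimal-hypersurface equation v''(x)/(1 + v'(x)²) + (n−1)·(cos x / sin x)·v'(x) = 0 for all x ∈ (C, π−C). -/
/-! The slope `w = (ρ^m - 1)^(-1/2)`, with `ρ = sin x / sin C` and `m = 2(n-1)`, satisfies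
`1 + w² = ρ^m w²`, while the chain rule together with `ρ' = ρ cot x` gives
`w' = -(m/2) cot x ρ^m w³`. Dividing, `w' / (1 + w²) = -(m/2) cot x · w`. -/

open Real Set

lemma Real.sin_lt_sin_of_mem_Ioo {C x : ℝ} (hC : -(π / 2) ≤ C) (hx : x ∈ Ioo C (π - C)) :
    sin C < sin x := by
  obtain ⟨hCx, hxC⟩ := hx
  rcases le_or_gt x (π / 2) with hx2 | hx2
  · exact strictMonoOn_sin ⟨hC, by linarith⟩ ⟨by linarith, hx2⟩ hCx
  · rw [← sin_pi_sub x]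
    exact strictMonoOn_sin ⟨hC, by linarith⟩ ⟨by linarith, by linarith⟩ (by linarith)

lemma Real.rpow_neg_half_sq {u : ℝ} (hu : 0 < u) : (u ^ (-(1 : ℝ) / 2)) ^ 2 = u⁻¹ := by
  rw [← rpow_natCast, ← rpow_mul hu.le]
  norm_num [rpow_neg_one]

lemma Real.rpow_neg_three_halves {u : ℝ} (hu : 0 < u) :
    u ^ (-(1 : ℝ) / 2 - 1) = (u ^ (-(1 : ℝ) / 2)) ^ 3 := by
  rw [← rpow_natCast, ← rpow_mul hu.le]
  norm_num

/-- The slope `v'` of the spherical catenoid profile, with `a = sin C`. -/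
noncomputable def catenoidSlope (m : ℕ) (a x : ℝ) : ℝ :=
  ((sin x / a) ^ m - 1) ^ (-(1 : ℝ) / 2)

section catenoidSlope

variable {m : ℕ} {a x : ℝ}

lemma one_lt_sin_div_pow (hm : m ≠ 0) (ha : 0 < a) (hax : a < sin x) : 1 < (sin x / a) ^ m :=
  one_lt_pow₀ ((one_lt_div ha).mpr hax) hm

lemma one_add_catenoidSlope_sq (hm : m ≠ 0) (ha : 0 < a) (hax : a < sin x) :
    1 + catenoidSlope m a x ^ 2 = (sin x / a) ^ m * catenoidSlope m a x ^ 2 := by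
  have hu : 0 < (sin x / a) ^ m - 1 := sub_pos.mpr (one_lt_sin_div_pow hm ha hax)
  rw [catenoidSlope, rpow_neg_half_sq hu]
  field_simp
  ring

lemma hasDerivAt_catenoidSlope (hm : m ≠ 0) (ha : 0 < a) (hax : a < sin x) :
    HasDerivAt (catenoidSlope m a)
      (-(m / 2) * (cos x / sin x) * (sin x / a) ^ m * catenoidSlope m a x ^ 3) x := by
  have hu : 0 < (sin x / a) ^ m - 1 := sub_pos.mpr (one_lt_sin_div_pow hm ha hax)
  have hratio : HasDerivAt (fun y ↦ (sin y / a) ^ m - 1)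
      (m * (sin x / a) ^ (m - 1) * (cos x / a)) x :=
    (((hasDerivAt_sin x).div_const a).pow m).sub_const 1
  refine (hratio.rpow_const (p := -(1 : ℝ) / 2) (Or.inl hu.ne')).congr_deriv ?_
  have hsin : sin x ≠ 0 := (ha.trans hax).ne'
  have hpow : (sin x / a) ^ m = (sin x / a) ^ (m - 1) * (sin x / a) := by
    rw [← pow_succ, Nat.sub_add_cancel (Nat.one_le_iff_ne_zero.mpr hm)]
  rw [catenoidSlope, rpow_neg_three_halves hu, hpow]
  field_simp

lemma catenoidSlope_ode (hm : m ≠ 0) (ha : 0 < a) (hax : a < sin x) :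
    -(m / 2) * (cos x / sin x) * (sin x / a) ^ m * catenoidSlope m a x ^ 3
        / (1 + catenoidSlope m a x ^ 2)
      + m / 2 * (cos x / sin x) * catenoidSlope m a x = 0 := by
  have hw : 0 < catenoidSlope m a x :=
    rpow_pos_of_pos (sub_pos.mpr (one_lt_sin_div_pow hm ha hax)) _
  have hρ : 0 < (sin x / a) ^ m := pow_pos (div_pos (ha.trans hax) ha) m
  rw [one_add_catenoidSlope_sq hm ha hax]
  field_simp
  ring

end catenoidSlope

/-- The horizontal profile function of the spherical catenoid, whose derivative is
`v'(x) = ((sin x / sin C)^{2(n−1)} − 1)^{−1/2}`, is twice differentiable and satisfies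
the minimal-hypersurface equation `v''/(1+(v')²) + (n−1)(cos x/sin x)v' = 0`. -/
theorem spherical_catenoid_horizontal_minimal
    (n : ℕ) (hn : 2 ≤ n) (C : ℝ) (hC : C ∈ Set.Ioo 0 (π / 2))
    (v : ℝ → ℝ)
    (hv : ∀ x ∈ Set.Ioo C (π - C),
      HasDerivAt v (((Real.sin x / Real.sin C) ^ (2 * (n - 1)) - 1) ^ (-(1 : ℝ) / 2)) x) :
    ∀ x ∈ Set.Ioo C (π - C),
      DifferentiableAt ℝ (deriv v) x ∧
      deriv (deriv v) x / (1 + (deriv v x) ^ 2)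
        + ((n : ℝ) - 1) * (Real.cos x / Real.sin x) * deriv v x = 0 := by
  intro x hx
  have hm : 2 * (n - 1) ≠ 0 := by omega
  have hsinC : 0 < sin C := sin_pos_of_pos_of_lt_pi hC.1 (by linarith [hC.2, pi_pos])
  have hCx : sin C < sin x := sin_lt_sin_of_mem_Ioo (by linarith [hC.1, pi_pos]) hx
  have hderiv : deriv v =ᶠ[nhds x] catenoidSlope (2 * (n - 1)) (sin C) :=
    Filter.eventuallyEq_of_mem (isOpen_Ioo.mem_nhds hx) fun y hy ↦ (hv y hy).deriv
  have hderiv2 := (hasDerivAt_catenoidSlope hm hsinC hCx).congr_of_eventuallyEq hderiv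
  have hn1 : (n : ℝ) - 1 = ((2 * (n - 1) : ℕ) : ℝ) / 2 := by
    push_cast [Nat.cast_sub (by omega : 1 ≤ n)]
    ring
  refine ⟨hderiv2.differentiableAt, ?_⟩
  rw [hderiv2.deriv, hderiv.eq_of_nhds, hn1]
  exact catenoidSlope_ode hm hsinC hCx
end

section
/- Let n ≥ 2 be an integer. For C ∈ (0, π/2) define Y_C := 2·∫_C^{π/2} ((sin z / sin C)^{2(n−1)} − 1)^{−1/2} dz. Then Y_C → 0 as C → 0⁺. -/
/-!
Since `sin² z - sin² C = sin (z + C) sin (z - C)` with `sin (z + C) ≥ sin C cos C`, Jordan's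
inequality `sin x ≥ 2x/π` gives
`(sin z / sin C)^(2(n-1)) - 1 ≥ K (z - C)` on `[C, π/2]` with `K = 2 / (π tan C)`. Hence the
integral is at most `∫_C^{π/2} (K (z - C))^(-1/2) dz = 2 √((π/2 - C) / K)`, and `K → ∞` as `C → 0⁺`.
-/

open Real Set Filter Topology MeasureTheory

theorem sin_sq_sub_sin_sq (x y : ℝ) : sin x ^ 2 - sin y ^ 2 = sin (x + y) * sin (x - y) := by
  rw [sin_add, sin_sub]
  linear_combination sin y ^ 2 * sin_sq_add_cos_sq x - sin x ^ 2 * sin_sq_add_cos_sq y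

theorem mul_sub_le_sin_div_sin_pow_sub_one {C z : ℝ} {m : ℕ} (hm : 2 ≤ m) (hC : 0 < C)
    (hCz : C ≤ z) (hz : z ≤ π / 2) :
    2 / π / tan C * (z - C) ≤ (sin z / sin C) ^ m - 1 := by
  have hsC : 0 < sin C := sin_pos_of_pos_of_lt_pi hC (by linarith [pi_pos])
  have hcC : 0 ≤ cos C := cos_nonneg_of_mem_Icc ⟨by linarith, by linarith⟩
  have hsCz : sin C ≤ sin z := sin_le_sin_of_le_of_le_pi_div_two (by linarith) hz hCz
  have hsum : sin C * cos C ≤ sin (z + C) := by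
    rw [sin_add]
    have := cos_nonneg_of_mem_Icc ⟨by linarith, hz⟩
    nlinarith [mul_le_mul_of_nonneg_right hsCz hcC]
  have hjordan : 2 / π * (z - C) ≤ sin (z - C) := mul_le_sin (by linarith) (by linarith)
  calc 2 / π / tan C * (z - C) = sin C * cos C * (2 / π * (z - C)) / sin C ^ 2 := by
        rw [tan_eq_sin_div_cos]; field_simp
    _ ≤ sin (z + C) * sin (z - C) / sin C ^ 2 := by
        gcongr
        exact le_trans (by positivity) hsum
    _ = (sin z / sin C) ^ 2 - 1 := by
        rw [← sin_sq_sub_sin_sq]; field_simp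
    _ ≤ (sin z / sin C) ^ m - 1 := by
        gcongr
        exact (one_le_div hsC).2 hsCz

theorem integral_rpow_le_of_mul_sub_le {f : ℝ → ℝ} {a b K p : ℝ} (hab : a ≤ b) (hK : 0 < K)
    (hp : -1 < p) (hp0 : p ≤ 0) (hf : ∀ z ∈ Ioc a b, K * (z - a) ≤ f z) :
    ∫ z in a..b, f z ^ p ≤ K ^ p * (b - a) ^ (p + 1) / (p + 1) := by
  have hlin_nonneg : ∀ z ∈ Ioc a b, 0 ≤ K * (z - a) := fun z hz =>
    mul_nonneg hK.le (sub_nonneg.2 hz.1.le)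
  have hlin_int : IntervalIntegrable (fun z => K ^ p * (z - a) ^ p) volume a b := by
    simpa using ((intervalIntegral.intervalIntegrable_rpow' hp (a := 0) (b := b - a)).comp_sub_right
      a).const_mul (K ^ p)
  calc ∫ z in a..b, f z ^ p ≤ ∫ z in a..b, K ^ p * (z - a) ^ p := by
        rw [intervalIntegral.integral_of_le hab, intervalIntegral.integral_of_le hab]
        refine integral_mono_of_nonneg ?_ hlin_int.1 ?_
        · exact ae_restrict_of_forall_mem measurableSet_Ioc fun z hz =>
            rpow_nonneg ((hlin_nonneg z hz).trans (hf z hz)) p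
        · refine ae_restrict_of_forall_mem measurableSet_Ioc fun z hz => ?_
          show f z ^ p ≤ K ^ p * (z - a) ^ p
          rw [← mul_rpow hK.le (sub_nonneg.2 hz.1.le)]
          exact rpow_le_rpow_of_nonpos (mul_pos hK (sub_pos.2 hz.1)) (hf z hz) hp0
    _ = K ^ p * (b - a) ^ (p + 1) / (p + 1) := by
        rw [intervalIntegral.integral_const_mul, intervalIntegral.integral_comp_sub_right
          (fun x => x ^ p), sub_self, integral_rpow (Or.inl hp),
          zero_rpow (by linarith), sub_zero, mul_div_assoc]

theorem tendsto_div_tan_nhdsGT_zero {c : ℝ} (hc : 0 < c) :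
    Tendsto (fun C => c / tan C) (𝓝[>] 0) atTop := by
  have htan : Tendsto tan (𝓝[>] 0) (𝓝[>] 0) := by
    refine tendsto_nhdsWithin_iff.2 ⟨?_, ?_⟩
    · simpa using (continuousAt_tan.2 (by simp : cos (0:ℝ) ≠ 0)).tendsto.mono_left
        nhdsWithin_le_nhds
    · filter_upwards [Ioo_mem_nhdsGT (by positivity : (0:ℝ) < π / 2)] with C hC
      exact tan_pos_of_pos_of_lt_pi_div_two hC.1 hC.2
  exact (tendsto_inv_nhdsGT_zero.comp htan).const_mul_atTop hc

/-- The half-period `Y_C = 2∫_C^{π/2} ((sin z/sin C)^{2(n−1)} − 1)^{−1/2} dz`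
of the spherical catenoid tends to `0` as `C → 0⁺`. -/
theorem spherical_catenoid_halfperiod_tendsto_zero
    (n : ℕ) (hn : 2 ≤ n) :
    Filter.Tendsto
      (fun C : ℝ => 2 * ∫ z in C..(π / 2),
        ((Real.sin z / Real.sin C) ^ (2 * (n - 1)) - 1) ^ (-(1 : ℝ) / 2))
      (𝓝[>] (0 : ℝ)) (𝓝 0) := by
  set p : ℝ := -1 / 2
  have hbound : Tendsto (fun C => 2 * ((2 / π / tan C) ^ p * (π / 2 - C) ^ (p + 1) / (p + 1)))
      (𝓝[>] 0) (𝓝 0) := by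
    have hK := (tendsto_rpow_neg_atTop (by norm_num : (0:ℝ) < 1 / 2)).comp
      (tendsto_div_tan_nhdsGT_zero (by positivity : 0 < 2 / π))
    have hL : Tendsto (fun C : ℝ => (π / 2 - C) ^ (p + 1) / (p + 1)) (𝓝[>] 0)
        (𝓝 ((π / 2 - 0) ^ (p + 1) / (p + 1))) :=
      (((continuous_const.sub continuous_id).rpow_const fun _ => Or.inr (by norm_num)).tendsto
        0).mono_left nhdsWithin_le_nhds |>.div_const _
    simpa [p, neg_div, mul_div_assoc] using (hK.mul hL).const_mul 2
  have hsandwich : ∀ᶠ C in 𝓝[>] 0,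
      0 ≤ ∫ z in C..(π / 2), ((sin z / sin C) ^ (2 * (n - 1)) - 1) ^ p ∧
      ∫ z in C..(π / 2), ((sin z / sin C) ^ (2 * (n - 1)) - 1) ^ p ≤
        (2 / π / tan C) ^ p * (π / 2 - C) ^ (p + 1) / (p + 1) := by
    filter_upwards [Ioo_mem_nhdsGT (half_pos pi_pos)] with C ⟨hC, hCπ⟩
    have hK : 0 < 2 / π / tan C := by
      have := tan_pos_of_pos_of_lt_pi_div_two hC hCπ
      positivity
    have hf : ∀ z ∈ Ioc C (π / 2),
        2 / π / tan C * (z - C) ≤ (sin z / sin C) ^ (2 * (n - 1)) - 1 :=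
      fun z hz => mul_sub_le_sin_div_sin_pow_sub_one (by omega) hC hz.1.le hz.2
    refine ⟨?_, integral_rpow_le_of_mul_sub_le hCπ.le hK (by norm_num) (by norm_num) hf⟩
    rw [intervalIntegral.integral_of_le hCπ.le]
    exact setIntegral_nonneg measurableSet_Ioc fun z hz =>
      rpow_nonneg ((mul_nonneg hK.le (sub_nonneg.2 hz.1.le)).trans (hf z hz)) p
  refine tendsto_of_tendsto_of_tendsto_of_le_of_le' tendsto_const_nhds hbound ?_ ?_
  · exact hsandwich.mono fun C h => mul_nonneg zero_le_two h.1
  · exact hsandwich.mono fun C h => mul_le_mul_of_nonneg_left h.2 zero_le_two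
end

section
/- Let n ≥ 2 be an integer. For C ∈ (0, π/2) define Y_C := 2·∫_C^{π/2} ((sin z / sin C)^{2(n−1)} − 1)^{−1/2} dz. Then limsup_{C → (π/2)⁻} Y_C ≤ 4·√(2/(n−1)). -/
open Real Set Filter Topology MeasureTheory

/-! By `sin z - sin C = 2 sin ((z - C)/2) cos ((z + C)/2)` and `sin x ≥ 3x/4` on `[0, 1]`,
`sin z - sin C ≥ (9/32) (π/2 - C) (z - C)` for `0 ≤ C ≤ z ≤ π/2`. Since `sin C ≤ 1`, Bernoulli's
inequality turns this into `(sin z / sin C)^k - 1 ≥ κ (z - C)` with `κ = (9k/32) (π/2 - C)`, and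
comparing with `(κ (z - C))^(-1/2)` bounds the integral by `2 √((π/2 - C)/κ) = 2 √(32/(9k))`,
uniformly in `C ∈ (0, π/2)`. For `k = 2(n - 1)` this gives `Y_C ≤ 4 √(16/(9(n - 1)))`. -/

lemma three_div_four_mul_le_sin {x : ℝ} (hx₀ : 0 ≤ x) (hx₁ : x ≤ 1) : 3 / 4 * x ≤ sin x := by
  rcases hx₀.eq_or_lt with rfl | hx₀
  · simp
  have := sin_gt_sub_cube hx₀
  nlinarith [pow_le_one₀ hx₀.le hx₁ (n := 2)]

lemma sin_sub_sin_ge {C z : ℝ} (hC : 0 ≤ C) (hCz : C ≤ z) (hz : z ≤ π / 2) :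
    9 / 32 * (π / 2 - C) * (z - C) ≤ sin z - sin C := by
  have hπ := pi_gt_three
  have hπ' := pi_lt_four
  have h₁ : 3 / 4 * ((z - C) / 2) ≤ sin ((z - C) / 2) :=
    three_div_four_mul_le_sin (by linarith) (by linarith)
  have h₂ : 3 / 4 * ((π / 2 - C) / 2) ≤ cos ((z + C) / 2) := calc
    _ ≤ sin ((π / 2 - C) / 2) := three_div_four_mul_le_sin (by linarith) (by linarith)
    _ = cos ((π / 2 + C) / 2) := by rw [← cos_pi_div_two_sub]; ring_nf
    _ ≤ cos ((z + C) / 2) := cos_le_cos_of_nonneg_of_le_pi (by linarith) (by linarith) (by linarith)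
  rw [sin_sub_sin]
  nlinarith [mul_le_mul h₁ h₂ (by linarith) (by linarith)]

lemma sin_div_sin_pow_sub_one_ge (k : ℕ) {C z : ℝ} (hC : 0 < C) (hCz : C ≤ z) (hz : z ≤ π / 2) :
    k * (9 / 32) * (π / 2 - C) * (z - C) ≤ (sin z / sin C) ^ k - 1 := by
  have hsinC : 0 < sin C := sin_pos_of_pos_of_lt_pi hC (by linarith [pi_pos])
  have hsin := sin_sub_sin_ge hC.le hCz hz
  have hratio : sin z - sin C ≤ sin z / sin C - 1 := by
    rw [div_sub_one hsinC.ne', le_div_iff₀ hsinC]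
    have hmono : sin C ≤ sin z :=
      sin_le_sin_of_le_of_le_pi_div_two (by linarith [pi_pos]) hz hCz
    nlinarith [mul_le_mul_of_nonneg_left (sin_le_one C) (sub_nonneg.2 hmono)]
  have hbern := one_add_mul_le_pow (a := sin z / sin C - 1) (by nlinarith) k
  rw [add_sub_cancel] at hbern
  nlinarith [Nat.cast_nonneg (α := ℝ) k]

lemma intervalIntegral_rpow_neg_half_le {g : ℝ → ℝ} {c b κ : ℝ} (hcb : c ≤ b) (hκ : 0 < κ)
    (hg : ∀ z ∈ Ioc c b, κ * (z - c) ≤ g z) :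
    ∫ z in c..b, g z ^ (-(1 : ℝ) / 2) ≤ 2 * √((b - c) / κ) := by
  have hκc : IntervalIntegrable (fun z => κ ^ (-(1 : ℝ) / 2) * (z - c) ^ (-(1 : ℝ) / 2))
      volume c b := by
    refine IntervalIntegrable.const_mul ?_ _
    simpa using (intervalIntegral.intervalIntegrable_rpow' (a := 0) (b := b - c)
      (show (-1 : ℝ) < -(1 : ℝ) / 2 by norm_num)).comp_sub_right c
  calc ∫ z in c..b, g z ^ (-(1 : ℝ) / 2)
      ≤ ∫ z in c..b, κ ^ (-(1 : ℝ) / 2) * (z - c) ^ (-(1 : ℝ) / 2) := by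
        rw [intervalIntegral.integral_of_le hcb, intervalIntegral.integral_of_le hcb]
        -- no integrability of the left integrand is needed: otherwise its integral is `0`
        refine integral_mono_of_nonneg ?_ hκc.1 ?_ <;>
          filter_upwards [ae_restrict_mem measurableSet_Ioc] with z hz <;>
          have hpos : 0 < κ * (z - c) := mul_pos hκ (sub_pos.2 hz.1)
        · exact rpow_nonneg (hpos.le.trans (hg z hz)) _
        · rw [← mul_rpow hκ.le (sub_pos.2 hz.1).le]
          exact rpow_le_rpow_of_nonpos hpos (hg z hz) (by norm_num)
    _ = 2 * √((b - c) / κ) := by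
        rw [intervalIntegral.integral_const_mul, intervalIntegral.integral_comp_sub_right
          (fun u => u ^ (-(1 : ℝ) / 2)), sub_self, integral_rpow (Or.inl (by norm_num)),
          zero_rpow (by norm_num), sqrt_eq_rpow, div_rpow (by linarith) hκ.le,
          show -(1 : ℝ) / 2 = -(1 / 2) by ring, rpow_neg hκ.le,
          show -(1 / 2 : ℝ) + 1 = 1 / 2 by norm_num]
        field_simp
        ring

lemma integral_sin_div_sin_pow_sub_one_rpow_nonneg (k : ℕ) {C : ℝ} (hC : 0 < C) (hCπ : C ≤ π / 2) :
    0 ≤ ∫ z in C..(π / 2), ((sin z / sin C) ^ k - 1) ^ (-(1 : ℝ) / 2) :=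
  intervalIntegral.integral_nonneg hCπ fun z ⟨hCz, hzπ⟩ =>
    rpow_nonneg (le_trans (by positivity) (sin_div_sin_pow_sub_one_ge k hC hCz hzπ)) _

lemma integral_sin_div_sin_pow_sub_one_rpow_le {k : ℕ} (hk : 0 < k) {C : ℝ} (hC : 0 < C)
    (hCπ : C < π / 2) :
    ∫ z in C..(π / 2), ((sin z / sin C) ^ k - 1) ^ (-(1 : ℝ) / 2) ≤ 2 * √(32 / (9 * k)) := by
  have ha : 0 < π / 2 - C := sub_pos.2 hCπ
  have ha' : π - 2 * C ≠ 0 := by linarith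
  convert intervalIntegral_rpow_neg_half_le hCπ.le (by positivity)
    fun z hz => sin_div_sin_pow_sub_one_ge k hC hz.1.le hz.2 using 3
  field_simp

/-- `limsup_{C → (π/2)⁻} Y_C ≤ 4√(2/(n−1))`, where
`Y_C = 2∫_C^{π/2} ((sin z/sin C)^{2(n−1)} − 1)^{−1/2} dz` is the half-period of the
spherical catenoid. -/
theorem spherical_catenoid_halfperiod_limsup_upper
    (n : ℕ) (hn : 2 ≤ n) :
    Filter.limsup
        (fun C : ℝ => 2 * ∫ z in C..(π / 2),
          ((Real.sin z / Real.sin C) ^ (2 * (n - 1)) - 1) ^ (-(1 : ℝ) / 2))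
        (𝓝[<] (π / 2))
      ≤ 4 * Real.sqrt (2 / ((n : ℝ) - 1)) := by
  have hC : ∀ᶠ C in 𝓝[<] (π / 2), C ∈ Ioo 0 (π / 2) := Ioo_mem_nhdsLT (by positivity)
  refine limsup_le_of_le (isCoboundedUnder_le_of_eventually_le _ (x := 0)
    (hC.mono fun C hC => mul_nonneg zero_le_two
      (integral_sin_div_sin_pow_sub_one_rpow_nonneg _ hC.1 hC.2.le))) (hC.mono fun C hC => ?_)
  calc _ ≤ 2 * (2 * √(32 / (9 * ((2 * (n - 1) : ℕ) : ℝ)))) :=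
        mul_le_mul_of_nonneg_left
          (integral_sin_div_sin_pow_sub_one_rpow_le (by omega) hC.1 hC.2) zero_le_two
    _ = 4 * √(16 / 9 / ((n : ℝ) - 1)) := by
        rw [Nat.cast_mul, Nat.cast_sub (by omega)]
        push_cast
        rw [← mul_assoc, show (2 : ℝ) * 2 = 4 by norm_num]
        congr 2
        field_simp
        ring
    _ ≤ 4 * √(2 / ((n : ℝ) - 1)) := by
        have : (1 : ℝ) ≤ n := by exact_mod_cast (show 1 ≤ n by omega)
        gcongr
        norm_num
end

section
/- Let n ≥ 2 be an integer, let I ⊂ ℝ be an open interval and T > 0. Suppose u : I × (0,T) → ℝ is smooth with 0 < u(y,t) < π, and u satisfies ∂_t u = (∂_{yy} u)/(1 + (∂_y u)²) − (n−1)·cos(u)/sin(u) on I × (0,T). Define θ(y,t) := arctan(∂_y u(y,t)). Then θ satisfies ∂_t θ = (1/(1 + (∂_y u)²)) · ( ∂_{yy} θ + (n−1)·(∂_y u)/(sin u)² ) on I × (0,T). -/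
open Real Set

private lemma sliceY {F : ℝ × ℝ → ℝ} {y t : ℝ} (hF : DifferentiableAt ℝ F (y, t)) :
    HasDerivAt (fun z => F (z, t)) (fderiv ℝ F (y, t) (1, 0)) y := by
  have h := hF.hasFDerivAt.comp_hasDerivAt y ((hasDerivAt_id y).prodMk (hasDerivAt_const y t))
  simp at h; exact h

private lemma sliceT {F : ℝ × ℝ → ℝ} {y t : ℝ} (hF : DifferentiableAt ℝ F (y, t)) :
    HasDerivAt (fun s => F (y, s)) (fderiv ℝ F (y, t) (0, 1)) t := by
  have h := hF.hasFDerivAt.comp_hasDerivAt t ((hasDerivAt_const t y).prodMk (hasDerivAt_id t))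
  exact h

/-- The turning angle `θ = arctan(∂_y u)` of a solution of the vertical graph equation
`∂ₜu = ∂_{yy}u/(1+(∂_y u)²) − (n−1)cos(u)/sin(u)` satisfies
`∂ₜθ = (1/(1+(∂_y u)²))(∂_{yy}θ + (n−1)(∂_y u)/sin²u)`. -/
theorem turning_angle_equation_vertical
    (n : ℕ) (hn : 2 ≤ n) (a b T : ℝ) (hT : 0 < T)
    (u : ℝ → ℝ → ℝ)
    (hsmooth : ContDiffOn ℝ (⊤ : ℕ∞) (fun p : ℝ × ℝ => u p.1 p.2)
      (Set.Ioo a b ×ˢ Set.Ioo 0 T))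
    (hrange : ∀ y ∈ Set.Ioo a b, ∀ t ∈ Set.Ioo 0 T, 0 < u y t ∧ u y t < π)
    (hpde : ∀ y ∈ Set.Ioo a b, ∀ t ∈ Set.Ioo 0 T,
      deriv (fun s => u y s) t =
        deriv (deriv (fun z => u z t)) y / (1 + (deriv (fun z => u z t) y) ^ 2)
          - ((n : ℝ) - 1) * Real.cos (u y t) / Real.sin (u y t))
    (θ : ℝ → ℝ → ℝ)
    (hθ : ∀ z s, θ z s = Real.arctan (deriv (fun z' => u z' s) z)) :
    ∀ y ∈ Set.Ioo a b, ∀ t ∈ Set.Ioo 0 T,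
      deriv (fun s => θ y s) t =
        (1 / (1 + (deriv (fun z => u z t) y) ^ 2))
          * (deriv (deriv (fun z => θ z t)) y
              + ((n : ℝ) - 1) * (deriv (fun z => u z t) y) / (Real.sin (u y t)) ^ 2) := by
  set U : ℝ × ℝ → ℝ := fun p => u p.1 p.2 with hU
  set Ω : Set (ℝ × ℝ) := Set.Ioo a b ×ˢ Set.Ioo 0 T with hΩdef
  have hΩ : IsOpen Ω := isOpen_Ioo.prod isOpen_Ioo
  have hCD : ∀ {p : ℝ × ℝ}, p ∈ Ω → ContDiffAt ℝ (⊤ : ℕ∞) U p :=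
    fun hp => hsmooth.contDiffAt (hΩ.mem_nhds hp)
  set v1 : ℝ × ℝ := (1, 0) with hv1
  set v2 : ℝ × ℝ := (0, 1) with hv2
  set f1 : ℝ × ℝ → ℝ := fun p => fderiv ℝ U p v1 with hf1def
  set f2 : ℝ × ℝ → ℝ := fun p => fderiv ℝ U p v2 with hf2def
  -- smoothness of first partials
  have hf1cd : ∀ {p : ℝ × ℝ}, p ∈ Ω → ContDiffAt ℝ (⊤ : ℕ∞) f1 p := fun hp =>
    (ContinuousLinearMap.apply ℝ ℝ v1).contDiff.comp_contDiffAt _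
      ((hCD hp).fderiv_right (by simp))
  have hf2cd : ∀ {p : ℝ × ℝ}, p ∈ Ω → ContDiffAt ℝ (⊤ : ℕ∞) f2 p := fun hp =>
    (ContinuousLinearMap.apply ℝ ℝ v2).contDiff.comp_contDiffAt _
      ((hCD hp).fderiv_right (by simp))
  -- slice derivatives of u
  have hu_y : ∀ z t', (z, t') ∈ Ω → deriv (fun z' => u z' t') z = f1 (z, t') := by
    intro z t' hp
    exact (sliceY ((hCD hp).differentiableAt (by simp))).deriv
  have hu_t : ∀ z t', (z, t') ∈ Ω → deriv (fun s => u z s) t' = f2 (z, t') := by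
    intro z t' hp
    exact (sliceT ((hCD hp).differentiableAt (by simp))).deriv
  intro y hy t ht
  have hyt : (y, t) ∈ Ω := ⟨hy, ht⟩
  set q : ℝ := f1 (y, t) with hq
  have hIa : Set.Ioo a b ∈ nhds y := isOpen_Ioo.mem_nhds hy
  have hIt : Set.Ioo (0:ℝ) T ∈ nhds t := isOpen_Ioo.mem_nhds ht
  -- θ slices as arctan of f1
  have hθslY : ∀ t', t' ∈ Set.Ioo (0:ℝ) T →
      (fun z => θ z t') =ᶠ[nhds y] fun z => Real.arctan (f1 (z, t')) := by
    intro t' ht'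
    filter_upwards [hIa] with z hz
    rw [hθ, hu_y z t' ⟨hz, ht'⟩]
  have hθslT : (fun s => θ y s) =ᶠ[nhds t] fun s => Real.arctan (f1 (y, s)) := by
    filter_upwards [hIt] with s hs
    rw [hθ, hu_y y s ⟨hy, hs⟩]
  -- time derivative of θ
  have hf1diff : DifferentiableAt ℝ f1 (y, t) := (hf1cd hyt).differentiableAt (by simp)
  have hdθt : deriv (fun s => θ y s) t = 1 / (1 + q ^ 2) * fderiv ℝ f1 (y, t) v2 := by
    rw [hθslT.deriv_eq]
    exact ((sliceT hf1diff).arctan).deriv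
  -- spatial derivative of θ at any z in Ioo a b
  set θy : ℝ → ℝ := fun z => 1 / (1 + (f1 (z, t)) ^ 2) * fderiv ℝ f1 (z, t) v1 with hθydef
  have hθy : ∀ z ∈ Set.Ioo a b, deriv (fun z' => θ z' t) z = θy z := by
    intro z hz
    have hzt : (z, t) ∈ Ω := ⟨hz, ht⟩
    have hdiff : DifferentiableAt ℝ f1 (z, t) := (hf1cd hzt).differentiableAt (by simp)
    have : (fun z' => θ z' t) =ᶠ[nhds z] fun z' => Real.arctan (f1 (z', t)) := by
      filter_upwards [isOpen_Ioo.mem_nhds hz] with w hw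
      rw [hθ, hu_y w t ⟨hw, ht⟩]
    rw [this.deriv_eq]
    exact ((sliceY hdiff).arctan).deriv
  have hEθ : deriv (fun z' => θ z' t) =ᶠ[nhds y] θy := by
    filter_upwards [hIa] with z hz using hθy z hz
  -- second slice derivative of u
  have h2nd : ∀ z ∈ Set.Ioo a b,
      deriv (deriv (fun z' => u z' t)) z = fderiv ℝ f1 (z, t) v1 := by
    intro z hz
    have hzt : (z, t) ∈ Ω := ⟨hz, ht⟩
    have hE : deriv (fun z' => u z' t) =ᶠ[nhds z] fun z' => f1 (z', t) := by
      filter_upwards [isOpen_Ioo.mem_nhds hz] with w hw using hu_y w t ⟨hw, ht⟩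
    rw [hE.deriv_eq]
    exact (sliceY ((hf1cd hzt).differentiableAt (by simp))).deriv
  -- rewrite the PDE: f2 (z,t) = θy z - (n-1) cos/sin
  have hpde' : ∀ z ∈ Set.Ioo a b,
      f2 (z, t) = θy z - ((n : ℝ) - 1) * Real.cos (u z t) / Real.sin (u z t) := by
    intro z hz
    have hzt : (z, t) ∈ Ω := ⟨hz, ht⟩
    have h := hpde z hz t ht
    rw [hu_t z t hzt, h2nd z hz, hu_y z t hzt] at h
    rw [h, hθydef]
    ring
  -- symmetry of mixed second derivatives
  have hdU2 : DifferentiableAt ℝ (fderiv ℝ U) (y, t) :=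
    ((hCD hyt).fderiv_right (m := (⊤ : ℕ∞)) (by simp)).differentiableAt (by simp)
  have hF1 : HasFDerivAt f1
      ((ContinuousLinearMap.apply ℝ ℝ v1).comp (fderiv ℝ (fderiv ℝ U) (y, t))) (y, t) :=
    (ContinuousLinearMap.apply ℝ ℝ v1).hasFDerivAt.comp _ hdU2.hasFDerivAt
  have hF2 : HasFDerivAt f2
      ((ContinuousLinearMap.apply ℝ ℝ v2).comp (fderiv ℝ (fderiv ℝ U) (y, t))) (y, t) :=
    (ContinuousLinearMap.apply ℝ ℝ v2).hasFDerivAt.comp _ hdU2.hasFDerivAt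
  have hsym : fderiv ℝ f1 (y, t) v2 = fderiv ℝ f2 (y, t) v1 := by
    have hs := (hCD hyt).isSymmSndFDerivAt ((by rw [minSmoothness_of_isRCLikeNormedField]; exact WithTop.coe_le_coe.mpr (le_top : (2 : ℕ∞) ≤ ⊤)))
    have e1 : fderiv ℝ f1 (y, t) v2 = fderiv ℝ (fderiv ℝ U) (y, t) v2 v1 := by
      rw [hF1.fderiv]; rfl
    have e2 : fderiv ℝ f2 (y, t) v1 = fderiv ℝ (fderiv ℝ U) (y, t) v1 v2 := by
      rw [hF2.fderiv]; rfl
    rw [e1, e2, hs v2 v1]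
  -- differentiate the PDE in y
  have hf2diff : DifferentiableAt ℝ f2 (y, t) := (hf2cd hyt).differentiableAt (by simp)
  have hf2sl : deriv (fun z => f2 (z, t)) y = fderiv ℝ f2 (y, t) v1 :=
    (sliceY hf2diff).deriv
  have hEf2 : (fun z => f2 (z, t)) =ᶠ[nhds y]
      fun z => θy z - ((n : ℝ) - 1) * Real.cos (u z t) / Real.sin (u z t) := by
    filter_upwards [hIa] with z hz using hpde' z hz
  -- differentiability of θy at y
  have hdenne : (1 : ℝ) + q ^ 2 ≠ 0 := by positivity
  have hd1 : DifferentiableAt ℝ (fun z => f1 (z, t)) y := (sliceY hf1diff).differentiableAt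
  have hf11cd : ContDiffAt ℝ (⊤ : ℕ∞) (fun p => fderiv ℝ f1 p v1) (y, t) :=
    (ContinuousLinearMap.apply ℝ ℝ v1).contDiff.comp_contDiffAt _
      ((hf1cd hyt).fderiv_right (by simp))
  have hd11 : DifferentiableAt ℝ (fun z => fderiv ℝ f1 (z, t) v1) y :=
    (sliceY (hf11cd.differentiableAt (by simp))).differentiableAt
  have hθydiff : DifferentiableAt ℝ θy y := by
    have : DifferentiableAt ℝ (fun z => 1 / (1 + (f1 (z, t)) ^ 2)) y :=
      (differentiableAt_const 1).div ((differentiableAt_const 1).add (hd1.pow 2))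
        (by positivity)
    exact this.mul hd11
  -- derivative of the cotangent term
  have hsinpos : 0 < Real.sin (u y t) :=
    Real.sin_pos_of_pos_of_lt_pi (hrange y hy t ht).1 (hrange y hy t ht).2
  have hsinne : Real.sin (u y t) ≠ 0 := ne_of_gt hsinpos
  have hg : HasDerivAt (fun z => u z t) q y := sliceY ((hCD hyt).differentiableAt (by simp))
  have hcos : HasDerivAt (fun z => Real.cos (u z t)) (-Real.sin (u y t) * q) y := hg.cos
  have hsin : HasDerivAt (fun z => Real.sin (u z t)) (Real.cos (u y t) * q) y := hg.sin
  have hcot : HasDerivAt (fun z => Real.cos (u z t) / Real.sin (u z t))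
      (-q / Real.sin (u y t) ^ 2) y := by
    have h := hcos.div hsin hsinne
    have hval : (-Real.sin (u y t) * q * Real.sin (u y t) -
        Real.cos (u y t) * (Real.cos (u y t) * q)) / Real.sin (u y t) ^ 2
        = -q / Real.sin (u y t) ^ 2 := by
      have hpc := Real.sin_sq_add_cos_sq (u y t)
      rw [div_eq_div_iff (by positivity) (by positivity)]
      linear_combination (-q * Real.sin (u y t) ^ 2) * hpc
    rwa [hval] at h
  -- compute the mixed derivative
  have hmix : fderiv ℝ f1 (y, t) v2 =
      deriv θy y + ((n : ℝ) - 1) * q / Real.sin (u y t) ^ 2 := by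
    rw [hsym, ← hf2sl, hEf2.deriv_eq]
    have hcterm : HasDerivAt
        (fun z => ((n : ℝ) - 1) * Real.cos (u z t) / Real.sin (u z t))
        (((n : ℝ) - 1) * (-q / Real.sin (u y t) ^ 2)) y := by
      have h := hcot.const_mul ((n : ℝ) - 1)
      simpa [mul_div_assoc] using h
    rw [deriv_fun_sub hθydiff hcterm.differentiableAt, hcterm.deriv]
    ring
  -- conclude
  rw [hdθt, hu_y y t hyt, ← hq, hEθ.deriv_eq, hmix]
end

section
/- Let n ≥ 2 be an integer, let (a,b) ⊆ (0, π) and T > 0. Suppose f : (a,b) × (0,T) → ℝ is smooth and satisfies ∂_t f = (∂_{xx} f)/(1 + (∂_x f)²) + (n−1)·(cos x/sin x)·∂_x f on (a,b) × (0,T). Define φ(x,t) := arctan(∂_x f(x,t)). Then ∂_t φ − (n−1)·(cos x/sin x)·∂_x φ − (∂_{xx} φ)/(1 + (∂_x f)²) = −(n−1)·(∂_x f)/( (sin x)²·(1 + (∂_x f)²) ) on (a,b) × (0,T). -/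
open Real Set

section SliceLemmas

variable {E : Type*} [NormedAddCommGroup E] [NormedSpace ℝ E]

lemma hasDerivAt_slice_x {G : ℝ × ℝ → E} {x t : ℝ} (h : DifferentiableAt ℝ G (x, t)) :
    HasDerivAt (fun z => G (z, t)) (fderiv ℝ G (x, t) (1, 0)) x := by
  have h1 : HasDerivAt (fun z : ℝ => ((z, t) : ℝ × ℝ)) ((1 : ℝ), (0 : ℝ)) x :=
    (hasDerivAt_id x).prodMk (hasDerivAt_const x t)
  exact h.hasFDerivAt.comp_hasDerivAt x h1

lemma hasDerivAt_slice_t {G : ℝ × ℝ → E} {x t : ℝ} (h : DifferentiableAt ℝ G (x, t)) :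
    HasDerivAt (fun s => G (x, s)) (fderiv ℝ G (x, t) (0, 1)) t := by
  have h1 : HasDerivAt (fun s : ℝ => ((x, s) : ℝ × ℝ)) ((0 : ℝ), (1 : ℝ)) t :=
    (hasDerivAt_const t x).prodMk (hasDerivAt_id t)
  exact h.hasFDerivAt.comp_hasDerivAt t h1

end SliceLemmas

set_option maxHeartbeats 1600000 in
/-- The turning angle `φ = arctan(∂_x f)` of a solution of the horizontal graph equation
`∂ₜf = ∂_{xx}f/(1+(∂_x f)²) + (n−1)(cos x/sin x)∂_x f` satisfies
`∂ₜφ − (n−1)(cos x/sin x)∂_xφ − ∂_{xx}φ/(1+(∂_x f)²) = −(n−1)(∂_x f)/(sin²x (1+(∂_x f)²))`. -/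
theorem turning_angle_equation_horizontal
    (n : ℕ) (hn : 2 ≤ n) (a b T : ℝ) (hT : 0 < T)
    (hab : Set.Ioo a b ⊆ Set.Ioo 0 π)
    (f : ℝ → ℝ → ℝ)
    (hsmooth : ContDiffOn ℝ (⊤ : ℕ∞) (fun p : ℝ × ℝ => f p.1 p.2)
      (Set.Ioo a b ×ˢ Set.Ioo 0 T))
    (hpde : ∀ x ∈ Set.Ioo a b, ∀ t ∈ Set.Ioo 0 T,
      deriv (fun s => f x s) t =
        deriv (deriv (fun z => f z t)) x / (1 + (deriv (fun z => f z t) x) ^ 2)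
          + ((n : ℝ) - 1) * (Real.cos x / Real.sin x) * deriv (fun z => f z t) x)
    (φ : ℝ → ℝ → ℝ)
    (hφ : ∀ z s, φ z s = Real.arctan (deriv (fun z' => f z' s) z)) :
    ∀ x ∈ Set.Ioo a b, ∀ t ∈ Set.Ioo 0 T,
      deriv (fun s => φ x s) t
        - ((n : ℝ) - 1) * (Real.cos x / Real.sin x) * deriv (fun z => φ z t) x
        - deriv (deriv (fun z => φ z t)) x / (1 + (deriv (fun z => f z t) x) ^ 2)
        = -((n : ℝ) - 1) * (deriv (fun z => f z t) x)
            / ((Real.sin x) ^ 2 * (1 + (deriv (fun z => f z t) x) ^ 2)) := by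
  intro x hx t ht
  have hU : IsOpen (Set.Ioo a b ×ˢ Set.Ioo 0 T) := isOpen_Ioo.prod isOpen_Ioo
  set F : ℝ × ℝ → ℝ := fun p => f p.1 p.2 with hFdef
  set A : ℝ × ℝ → (ℝ × ℝ →L[ℝ] ℝ) := fderiv ℝ F with hAdef
  set B := fderiv ℝ A with hBdef
  -- smoothness at every point of the open rectangle
  have hFq : ∀ q ∈ Set.Ioo a b ×ˢ Set.Ioo 0 T, ContDiffAt ℝ (⊤ : ℕ∞) F q := fun q hq =>
    hsmooth.contDiffAt (hU.mem_nhds hq)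
  have hAq : ∀ q ∈ Set.Ioo a b ×ˢ Set.Ioo 0 T, ContDiffAt ℝ (⊤ : ℕ∞) A q := fun q hq =>
    (hFq q hq).fderiv_right (by simp)
  have hBq : ∀ q ∈ Set.Ioo a b ×ˢ Set.Ioo 0 T, ContDiffAt ℝ (⊤ : ℕ∞) B q := fun q hq =>
    (hAq q hq).fderiv_right (by simp)
  -- x-derivative of f
  have hfx : ∀ z ∈ Set.Ioo a b, ∀ s ∈ Set.Ioo 0 T,
      HasDerivAt (fun z' => f z' s) (A (z, s) (1, 0)) z := fun z hz s hs =>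
    hasDerivAt_slice_x ((hFq (z, s) ⟨hz, hs⟩).differentiableAt (by simp))
  -- t-derivative of f
  have hft : ∀ z ∈ Set.Ioo a b, ∀ s ∈ Set.Ioo 0 T,
      HasDerivAt (fun s' => f z s') (A (z, s) (0, 1)) s := fun z hz s hs =>
    hasDerivAt_slice_t ((hFq (z, s) ⟨hz, hs⟩).differentiableAt (by simp))
  -- slices of A
  have hAx : ∀ z ∈ Set.Ioo a b, ∀ s ∈ Set.Ioo 0 T,
      HasDerivAt (fun z' => A (z', s)) (B (z, s) (1, 0)) z := fun z hz s hs =>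
    hasDerivAt_slice_x ((hAq (z, s) ⟨hz, hs⟩).differentiableAt (by simp))
  have hAt : ∀ z ∈ Set.Ioo a b, ∀ s ∈ Set.Ioo 0 T,
      HasDerivAt (fun s' => A (z, s')) (B (z, s) (0, 1)) s := fun z hz s hs =>
    hasDerivAt_slice_t ((hAq (z, s) ⟨hz, hs⟩).differentiableAt (by simp))
  -- applied versions
  have hux : ∀ z ∈ Set.Ioo a b, ∀ s ∈ Set.Ioo 0 T,
      HasDerivAt (fun z' => A (z', s) (1, 0)) (B (z, s) (1, 0) (1, 0)) z := by
    intro z hz s hs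
    simpa using (hAx z hz s hs).clm_apply (hasDerivAt_const z (((1 : ℝ), (0 : ℝ)) : ℝ × ℝ))
  have hut : ∀ z ∈ Set.Ioo a b, ∀ s ∈ Set.Ioo 0 T,
      HasDerivAt (fun s' => A (z, s') (1, 0)) (B (z, s) (0, 1) (1, 0)) s := by
    intro z hz s hs
    simpa using (hAt z hz s hs).clm_apply (hasDerivAt_const s (((1 : ℝ), (0 : ℝ)) : ℝ × ℝ))
  have hftx : ∀ z ∈ Set.Ioo a b, ∀ s ∈ Set.Ioo 0 T,
      HasDerivAt (fun z' => A (z', s) (0, 1)) (B (z, s) (1, 0) (0, 1)) z := by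
    intro z hz s hs
    simpa using (hAx z hz s hs).clm_apply (hasDerivAt_const z (((0 : ℝ), (1 : ℝ)) : ℝ × ℝ))
  -- second x-derivative of f
  have hfxx : ∀ z ∈ Set.Ioo a b, ∀ s ∈ Set.Ioo 0 T,
      deriv (deriv (fun z' => f z' s)) z = B (z, s) (1, 0) (1, 0) := by
    intro z hz s hs
    have heq : deriv (fun z' => f z' s) =ᶠ[nhds z] fun z' => A (z', s) (1, 0) := by
      filter_upwards [isOpen_Ioo.mem_nhds hz] with z' hz'
      exact (hfx z' hz' s hs).deriv
    rw [heq.deriv_eq]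
    exact (hux z hz s hs).deriv
  -- PDE rewritten in terms of A and B
  have hpde' : ∀ z ∈ Set.Ioo a b,
      A (z, t) (0, 1) = B (z, t) (1, 0) (1, 0) / (1 + (A (z, t) (1, 0)) ^ 2)
        + ((n : ℝ) - 1) * (Real.cos z / Real.sin z) * A (z, t) (1, 0) := by
    intro z hz
    have h0 := hpde z hz t ht
    rw [(hft z hz t ht).deriv, (hfx z hz t ht).deriv, hfxx z hz t ht] at h0
    exact h0
  -- symmetry of second derivatives
  have hsym : B (x, t) (1, 0) (0, 1) = B (x, t) (0, 1) (1, 0) :=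
    ((hFq (x, t) ⟨hx, ht⟩).isSymmSndFDerivAt (by simp only [minSmoothness_of_isRCLikeNormedField]; exact WithTop.coe_le_coe.mpr le_top)) _ _
  -- abbreviations
  set u := A (x, t) (1, 0) with hu
  set ux := B (x, t) (1, 0) (1, 0) with huxv
  have hupos : (0 : ℝ) < 1 + u ^ 2 := by positivity
  have hune : (1 : ℝ) + u ^ 2 ≠ 0 := ne_of_gt hupos
  have hsin : Real.sin x ≠ 0 :=
    ne_of_gt (Real.sin_pos_of_pos_of_lt_pi (hab hx).1 (hab hx).2)
  -- the function ψ = ∂ₓφ as a function of z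
  set ψ : ℝ → ℝ :=
    fun z => 1 / (1 + (A (z, t) (1, 0)) ^ 2) * B (z, t) (1, 0) (1, 0) with hψdef
  -- ∂ₓ φ
  have hφx : ∀ z ∈ Set.Ioo a b, HasDerivAt (fun z' => φ z' t) (ψ z) z := by
    intro z hz
    have h1 := (hux z hz t ht).arctan
    have heq : (fun z' => φ z' t) =ᶠ[nhds z] fun z' => Real.arctan (A (z', t) (1, 0)) := by
      filter_upwards [isOpen_Ioo.mem_nhds hz] with z' hz'
      rw [hφ, (hfx z' hz' t ht).deriv]
    exact h1.congr_of_eventuallyEq heq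
  -- ∂ₜ φ
  have hφt : deriv (fun s => φ x s) t = 1 / (1 + u ^ 2) * B (x, t) (0, 1) (1, 0) := by
    have heq : (fun s => φ x s) =ᶠ[nhds t] fun s => Real.arctan (A (x, s) (1, 0)) := by
      filter_upwards [isOpen_Ioo.mem_nhds ht] with s hs
      rw [hφ, (hfx x hx s hs).deriv]
    rw [heq.deriv_eq]
    exact ((hut x hx t ht).arctan).deriv
  -- ψ is differentiable at x
  have hψdiff : DifferentiableAt ℝ ψ x := by
    have hw : DifferentiableAt ℝ (fun z => B (z, t) (1, 0) (1, 0)) x := by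
      have hB := hasDerivAt_slice_x ((hBq (x, t) ⟨hx, ht⟩).differentiableAt (by simp))
      exact ((hB.clm_apply (hasDerivAt_const x (((1 : ℝ), (0 : ℝ)) : ℝ × ℝ))).clm_apply
        (hasDerivAt_const x (((1 : ℝ), (0 : ℝ)) : ℝ × ℝ))).differentiableAt
    have hden : DifferentiableAt ℝ (fun z => 1 + (A (z, t) (1, 0)) ^ 2) x :=
      (differentiableAt_const _).add ((hux x hx t ht).differentiableAt.pow 2)
    exact (((differentiableAt_const (1 : ℝ)).div hden hune).mul hw)
  -- ∂ₓₓ φ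
  have hφxx : deriv (deriv (fun z => φ z t)) x = deriv ψ x := by
    apply Filter.EventuallyEq.deriv_eq
    filter_upwards [isOpen_Ioo.mem_nhds hx] with z hz
    exact (hφx z hz).deriv
  -- derivative of cot
  have hcot : HasDerivAt (fun z => Real.cos z / Real.sin z)
      (((-Real.sin x) * Real.sin x - Real.cos x * Real.cos x) / Real.sin x ^ 2) x :=
    (Real.hasDerivAt_cos x).div (Real.hasDerivAt_sin x) hsin
  -- differentiate the PDE in x
  have hR : HasDerivAt
      (fun z => ψ z + ((n : ℝ) - 1) * ((Real.cos z / Real.sin z) * A (z, t) (1, 0)))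
      (deriv ψ x + ((n : ℝ) - 1) *
        ((((-Real.sin x) * Real.sin x - Real.cos x * Real.cos x) / Real.sin x ^ 2) * u
          + (Real.cos x / Real.sin x) * ux)) x :=
    hψdiff.hasDerivAt.add ((hcot.mul (hux x hx t ht)).const_mul ((n : ℝ) - 1))
  have hutval : B (x, t) (0, 1) (1, 0) = deriv ψ x + ((n : ℝ) - 1) *
      ((((-Real.sin x) * Real.sin x - Real.cos x * Real.cos x) / Real.sin x ^ 2) * u
        + (Real.cos x / Real.sin x) * ux) := by
    rw [← hsym, ← (hftx x hx t ht).deriv]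
    have heq : (fun z => A (z, t) (0, 1)) =ᶠ[nhds x]
        fun z => ψ z + ((n : ℝ) - 1) * ((Real.cos z / Real.sin z) * A (z, t) (1, 0)) := by
      filter_upwards [isOpen_Ioo.mem_nhds hx] with z hz
      rw [hpde' z hz, hψdef]
      ring
    rw [heq.deriv_eq]
    exact hR.deriv
  -- put everything together
  rw [hφt, (hfx x hx t ht).deriv, (hφx x hx).deriv, hφxx, hutval, hψdef]
  have hpyth := Real.sin_sq_add_cos_sq x
  have hc' : (-Real.sin x * Real.sin x - Real.cos x * Real.cos x) / Real.sin x ^ 2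
      = -(1 / Real.sin x ^ 2) := by
    field_simp
    linear_combination -hpyth
  rw [hc']
  field_simp
  ring
end

section
/- Let n ≥ 2 be an integer, h > 0 and T > 0. Suppose u : [0,h] × [0,T) → ℝ is smooth, satisfies 0 < u(y,t) ≤ π/2 with u(h,t) = π/2 for all t ∈ [0,T), satisfies ∂_y u(y,t) > 0 for all y ∈ (0,h] and t ∈ [0,T), and solves ∂_t u = (∂_{yy} u)/(1 + (∂_y u)²) − (n−1)·cos(u)/sin(u) on (0,h) × (0,T). Fix a ∈ (0,h), set λ := π/(h − a) and ε := min_{y ∈ [a,h]} arctan(∂_y u(y,0)) (which is positive). Then for all y ∈ [a,h] and t ∈ [0,T): ∂_y u(y,t) ≥ ε·e^{−λ²t}·sin(λ(y − a)); consequently u(h,t) − u(a,t) ≥ (2ε/λ)·e^{−λ²t}, i.e. u(a,t) ≤ π/2 − (2ε/λ)·e^{−λ²t}. -/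
open Real Set Filter Topology


/-- If `f` has derivative `c` at `x` and `f x ≤ f y` for `y` slightly to the left, `c ≤ 0`. -/
lemma deriv_nonpos_of_min_left {f : ℝ → ℝ} {x c : ℝ} (hf : HasDerivAt f c x)
    (hmin : ∀ᶠ y in 𝓝[<] x, f x ≤ f y) : c ≤ 0 := by
  have ht := (hasDerivAt_iff_tendsto_slope.1 hf).mono_left
    (nhdsWithin_mono x (fun y (hy : y ∈ Iio x) => ne_of_lt hy))
  refine le_of_tendsto ht ?_
  filter_upwards [hmin, self_mem_nhdsWithin] with y h1 (h2 : y ∈ Iio x)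
  rw [slope_def_field]
  exact div_nonpos_of_nonneg_of_nonpos (by linarith) (by simp at h2 ⊢; linarith)

/-- Second derivative at an interior local minimum is nonnegative. -/
lemma snd_deriv_nonneg_of_isLocalMin {f f' : ℝ → ℝ} {x c : ℝ}
    (hev : ∀ᶠ y in 𝓝 x, HasDerivAt f (f' y) y)
    (h2 : HasDerivAt f' c x) (hmin : IsLocalMin f x) : 0 ≤ c := by
  by_contra hc
  push_neg at hc
  have hfx : f' x = 0 := hmin.hasDerivAt_eq_zero hev.self_of_nhds
  -- slope of f' tends to c < 0 from the right, so f' < 0 just right of x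
  have ht := (hasDerivAt_iff_tendsto_slope.1 h2).mono_left
    (nhdsWithin_mono x (fun y (hy : y ∈ Ioi x) => (ne_of_gt hy)))
  have hneg : ∀ᶠ y in 𝓝[>] x, f' y < 0 := by
    have := ht.eventually (Filter.Tendsto.eventually_lt_const (by linarith : c < c/2) tendsto_id)
    filter_upwards [this, self_mem_nhdsWithin] with y hy (h2y : y ∈ Ioi x)
    rw [slope_def_field, hfx, sub_zero] at hy
    have hyx : 0 < y - x := by simp at h2y; linarith
    simp only [id_eq] at hy
    by_contra hge
    push_neg at hge
    have : 0 ≤ f' y / (y - x) := div_nonneg hge (le_of_lt hyx)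
    linarith
  have hall : ∀ᶠ y in 𝓝 x, HasDerivAt f (f' y) y ∧ f x ≤ f y := hev.and hmin
  rcases Metric.eventually_nhds_iff.1 hall with ⟨δ₁, hδ₁, hball⟩
  rcases mem_nhdsGT_iff_exists_Ioo_subset.1 hneg with ⟨b, hb, hIoo⟩
  set y := min (x + δ₁/2) ((x + b)/2) with hy
  have hb' : x < b := hb
  have hxy : x < y := by
    apply lt_min <;> linarith
  have hyb : y < b := by
    have : (x+b)/2 < b := by simp at hb; linarith
    exact lt_of_le_of_lt (min_le_right _ _) this
  have hsub : ∀ z ∈ Icc x y, HasDerivAt f (f' z) z ∧ f x ≤ f z := by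
    intro z hz
    apply hball
    have h1 : z - x < δ₁ := by
      have := hz.2
      have : z ≤ x + δ₁/2 := le_trans this (min_le_left _ _)
      linarith
    have h0 : x ≤ z := hz.1
    simp [abs_of_nonneg (by linarith : (0:ℝ) ≤ z - x), Real.dist_eq]
    linarith
  have hcont : ContinuousOn f (Icc x y) := fun z hz => ((hsub z hz).1).continuousAt.continuousWithinAt
  obtain ⟨ξ, hξ, hξeq⟩ := exists_hasDerivAt_eq_slope f f' hxy hcont
    (fun z hz => (hsub z (Ioo_subset_Icc_self hz)).1)
  have hξneg : f' ξ < 0 := hIoo ⟨hξ.1, lt_trans hξ.2 hyb⟩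
  have hge : f x ≤ f y := (hsub y ⟨le_of_lt hxy, le_refl y⟩).2
  rw [hξeq] at hξneg
  have hpos : 0 < y - x := by linarith
  have : f y - f x < 0 := by
    by_contra hge2
    push_neg at hge2
    exact absurd (div_nonneg hge2 (le_of_lt hpos)) (not_le.2 hξneg)
  linarith

private lemma aux_hasDerivAt_fst {G : ℝ × ℝ → ℝ} {y t : ℝ}
    (hG : DifferentiableAt ℝ G (y, t)) :
    HasDerivAt (fun z => G (z, t)) (fderiv ℝ G (y, t) ((1 : ℝ), (0 : ℝ))) y := by
  have hι : HasDerivAt (fun z : ℝ => ((z, t) : ℝ × ℝ)) ((1 : ℝ), (0 : ℝ)) y :=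
    (hasDerivAt_id y).prodMk (hasDerivAt_const y t)
  exact hG.hasFDerivAt.comp_hasDerivAt y hι

private lemma aux_hasDerivAt_snd {G : ℝ × ℝ → ℝ} {y t : ℝ}
    (hG : DifferentiableAt ℝ G (y, t)) :
    HasDerivAt (fun s => G (y, s)) (fderiv ℝ G (y, t) ((0 : ℝ), (1 : ℝ))) t := by
  have hι : HasDerivAt (fun s : ℝ => ((y, s) : ℝ × ℝ)) ((0 : ℝ), (1 : ℝ)) t :=
    (hasDerivAt_const t y).prodMk (hasDerivAt_id t)
  exact hG.hasFDerivAt.comp_hasDerivAt t hι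

set_option maxHeartbeats 1000000 in

/-- Improved gradient lower bound: if `u` solves the vertical graph equation on
`(0,h) × (0,T)` with `0 < u ≤ π/2`, `u(h,t) = π/2` and `∂_y u > 0` on `(0,h] × [0,T)`,
then for `a ∈ (0,h)`, `λ = π/(h−a)` and
`ε = min_{y ∈ [a,h]} arctan(∂_y u(y,0)) > 0`, one has
`∂_y u(y,t) ≥ ε e^{−λ²t} sin(λ(y−a))` on `[a,h] × [0,T)`, hence
`u(h,t) − u(a,t) ≥ (2ε/λ)e^{−λ²t}`, i.e. `u(a,t) ≤ π/2 − (2ε/λ)e^{−λ²t}`. -/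
theorem vertical_graph_gradient_lower_bound
    (n : ℕ) (hn : 2 ≤ n) (h T : ℝ) (hh : 0 < h) (hT : 0 < T)
    (u : ℝ → ℝ → ℝ)
    (hsmooth : ContDiffOn ℝ (⊤ : ℕ∞) (fun p : ℝ × ℝ => u p.1 p.2)
      (Set.Icc 0 h ×ˢ Set.Ico 0 T))
    (hrange : ∀ y ∈ Set.Icc 0 h, ∀ t ∈ Set.Ico 0 T,
      0 < u y t ∧ u y t ≤ π / 2)
    (htop : ∀ t ∈ Set.Ico 0 T, u h t = π / 2)
    (hgrad : ∀ y ∈ Set.Ioc 0 h, ∀ t ∈ Set.Ico 0 T,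
      0 < deriv (fun z => u z t) y)
    (hpde : ∀ y ∈ Set.Ioo 0 h, ∀ t ∈ Set.Ioo 0 T,
      deriv (fun s => u y s) t =
        deriv (deriv (fun z => u z t)) y / (1 + (deriv (fun z => u z t) y) ^ 2)
          - ((n : ℝ) - 1) * Real.cos (u y t) / Real.sin (u y t))
    (a lam ε : ℝ) (ha : a ∈ Set.Ioo 0 h) (hlam : lam = π / (h - a))
    (hε : ε = sInf ((fun y => Real.arctan (deriv (fun z => u z 0) y)) '' Set.Icc a h)) :
    0 < ε ∧
    (∀ y ∈ Set.Icc a h, ∀ t ∈ Set.Ico 0 T,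
      deriv (fun z => u z t) y ≥ ε * Real.exp (-lam ^ 2 * t) * Real.sin (lam * (y - a))) ∧
    (∀ t ∈ Set.Ico 0 T,
      u h t - u a t ≥ (2 * ε / lam) * Real.exp (-lam ^ 2 * t) ∧
      u a t ≤ π / 2 - (2 * ε / lam) * Real.exp (-lam ^ 2 * t)) := by
  set F : ℝ × ℝ → ℝ := fun p => u p.1 p.2 with hF
  set S : Set (ℝ × ℝ) := Set.Icc 0 h ×ˢ Set.Ico 0 T with hS
  set P : ℝ → ℝ → ℝ := fun y t => fderivWithin ℝ F S (y, t) (1, 0) with hP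
  have hSconv : Convex ℝ S := (convex_Icc 0 h).prod (convex_Ico 0 T)
  have hSint : (Ioo 0 h ×ˢ Ioo 0 T : Set (ℝ × ℝ)) = interior S := by
    rw [hS, interior_prod_eq, interior_Icc, interior_Ico]
  have hSuniq : UniqueDiffOn ℝ S := by
    apply uniqueDiffOn_convex hSconv
    rw [← hSint]
    exact ⟨(h/2, T/2), ⟨by constructor <;> [linarith; linarith], by constructor <;> [linarith; linarith]⟩⟩
  have hPcont : ContinuousOn (fun p : ℝ × ℝ => P p.1 p.2) S := by
    have := hsmooth.continuousOn_fderivWithin hSuniq (by simp)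
    have h2 : ContinuousOn (fun p : ℝ × ℝ => (fderivWithin ℝ F S p) (1, 0)) S :=
      (ContinuousLinearMap.apply ℝ ℝ ((1 : ℝ), (0 : ℝ))).continuous.comp_continuousOn this
    exact h2
  -- slice derivative within Icc 0 h
  have hL1 : ∀ y ∈ Set.Icc 0 h, ∀ t ∈ Set.Ico 0 T,
      HasDerivWithinAt (fun z => u z t) (P y t) (Set.Icc 0 h) y := by
    intro y hy t ht
    have hmem : ((y, t) : ℝ × ℝ) ∈ S := ⟨hy, ht⟩
    have hd := ((hsmooth.differentiableOn (by simp)) _ hmem).hasFDerivWithinAt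
    have hι : HasDerivAt (fun z : ℝ => ((z, t) : ℝ × ℝ)) ((1 : ℝ), (0 : ℝ)) y :=
      (hasDerivAt_id y).prodMk (hasDerivAt_const y t)
    have hmap : Set.MapsTo (fun z : ℝ => ((z, t) : ℝ × ℝ)) (Set.Icc 0 h) S :=
      fun z hz => ⟨hz, ht⟩
    exact hd.comp_hasDerivWithinAt y (hι.hasDerivWithinAt) hmap
  have hL2 : ∀ y ∈ Set.Ioc 0 h, ∀ t ∈ Set.Ico 0 T,
      HasDerivAt (fun z => u z t) (P y t) y := by
    intro y hy t ht
    rcases eq_or_lt_of_le hy.2 with heq | hlt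
    · -- y = h : use hgrad to get differentiability
      have hdiff : DifferentiableAt ℝ (fun z => u z t) y := by
        by_contra hnd
        have := deriv_zero_of_not_differentiableAt hnd
        have := hgrad y hy t ht
        rw [‹deriv (fun z => u z t) y = 0›] at this
        exact lt_irrefl 0 this
      have h1 : derivWithin (fun z => u z t) (Set.Icc 0 h) y = P y t :=
        (hL1 y ⟨le_of_lt hy.1, hy.2⟩ t ht).derivWithin
          ((uniqueDiffOn_Icc hh) y ⟨le_of_lt hy.1, hy.2⟩)
      have h2 : derivWithin (fun z => u z t) (Set.Icc 0 h) y = deriv (fun z => u z t) y :=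
        (hdiff.hasDerivAt.hasDerivWithinAt).derivWithin
          ((uniqueDiffOn_Icc hh) y ⟨le_of_lt hy.1, hy.2⟩)
      have : deriv (fun z => u z t) y = P y t := by rw [← h2, h1]
      rw [← this]
      exact hdiff.hasDerivAt
    · exact (hL1 y ⟨le_of_lt hy.1, hy.2⟩ t ht).hasDerivAt
        (Icc_mem_nhds hy.1 hlt)
  have hL2' : ∀ y ∈ Set.Ioc 0 h, ∀ t ∈ Set.Ico 0 T,
      deriv (fun z => u z t) y = P y t := fun y hy t ht => (hL2 y hy t ht).deriv
  have hPpos : ∀ y ∈ Set.Ioc 0 h, ∀ t ∈ Set.Ico 0 T, 0 < P y t := by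
    intro y hy t ht
    rw [← hL2' y hy t ht]; exact hgrad y hy t ht
  -- ε facts
  have hah : a < h := ha.2
  have hsub : Set.Icc a h ⊆ Set.Ioc 0 h := fun y hy => ⟨lt_of_lt_of_le ha.1 hy.1, hy.2⟩
  have hfeq : ∀ y ∈ Set.Icc a h,
      Real.arctan (deriv (fun z => u z 0) y) = Real.arctan (P y 0) := by
    intro y hy
    rw [hL2' y (hsub hy) 0 ⟨le_refl 0, hT⟩]
  have hcontf : ContinuousOn (fun y => Real.arctan (P y 0)) (Set.Icc a h) := by
    apply Real.continuous_arctan.comp_continuousOn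
    have hmap : Set.MapsTo (fun y : ℝ => ((y, 0) : ℝ × ℝ)) (Set.Icc a h) S :=
      fun y hy => ⟨⟨le_of_lt (lt_of_lt_of_le ha.1 hy.1), hy.2⟩, ⟨le_refl 0, hT⟩⟩
    exact hPcont.comp ((continuous_id.prodMk continuous_const).continuousOn) hmap
  have himg : (fun y => Real.arctan (deriv (fun z => u z 0) y)) '' Set.Icc a h
      = (fun y => Real.arctan (P y 0)) '' Set.Icc a h := by
    apply Set.image_congr
    intro y hy; exact hfeq y hy
  have hcpt : IsCompact ((fun y => Real.arctan (P y 0)) '' Set.Icc a h) :=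
    (isCompact_Icc).image_of_continuousOn hcontf
  have hne : ((fun y => Real.arctan (P y 0)) '' Set.Icc a h).Nonempty :=
    ⟨_, Set.mem_image_of_mem _ (Set.left_mem_Icc.2 (le_of_lt hah))⟩
  have hεmem : ∃ y₀ ∈ Set.Icc a h, ε = Real.arctan (P y₀ 0) := by
    have := hcpt.sInf_mem hne
    rw [hε, himg]
    rcases this with ⟨y₀, hy₀, hval⟩
    exact ⟨y₀, hy₀, hval.symm⟩
  have hεpos : 0 < ε := by
    rcases hεmem with ⟨y₀, hy₀, hval⟩
    rw [hval]
    have := Real.arctan_strictMono (hPpos y₀ (hsub hy₀) 0 ⟨le_refl 0, hT⟩)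
    rwa [Real.arctan_zero] at this
  have hεle : ∀ y ∈ Set.Icc a h, ε ≤ Real.arctan (P y 0) := by
    intro y hy
    rw [hε, himg]
    exact csInf_le hcpt.bddBelow (Set.mem_image_of_mem _ hy)
  -- interior machinery
  set Ω : Set (ℝ × ℝ) := Set.Ioo 0 h ×ˢ Set.Ioo 0 T with hΩdef
  have hΩopen : IsOpen Ω := (isOpen_Ioo).prod isOpen_Ioo
  have hΩS : Ω ⊆ S := Set.prod_mono Ioo_subset_Icc_self Ioo_subset_Ico_self
  have hFC : ContDiffOn ℝ (⊤ : ℕ∞) F Ω := hsmooth.mono hΩS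
  set V : ℝ × ℝ → ℝ := fun p => fderiv ℝ F p ((1 : ℝ), (0 : ℝ)) with hVdef
  set W : ℝ × ℝ → ℝ := fun p => fderiv ℝ F p ((0 : ℝ), (1 : ℝ)) with hWdef
  set Vy : ℝ × ℝ → ℝ := fun p => fderiv ℝ V p ((1 : ℝ), (0 : ℝ)) with hVydef
  set Vt : ℝ × ℝ → ℝ := fun p => fderiv ℝ V p ((0 : ℝ), (1 : ℝ)) with hVtdef
  set Wy : ℝ × ℝ → ℝ := fun p => fderiv ℝ W p ((1 : ℝ), (0 : ℝ)) with hWydef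
  set Vyy : ℝ × ℝ → ℝ := fun p => fderiv ℝ Vy p ((1 : ℝ), (0 : ℝ)) with hVyydef
  have hF1C : ContDiffOn ℝ (⊤ : ℕ∞) (fderiv ℝ F) Ω := hFC.fderiv_of_isOpen hΩopen (by simp)
  have hVC : ContDiffOn ℝ (⊤ : ℕ∞) V Ω :=
    (ContinuousLinearMap.apply ℝ ℝ ((1 : ℝ), (0 : ℝ))).contDiff.comp_contDiffOn hF1C
  have hWC : ContDiffOn ℝ (⊤ : ℕ∞) W Ω :=
    (ContinuousLinearMap.apply ℝ ℝ ((0 : ℝ), (1 : ℝ))).contDiff.comp_contDiffOn hF1C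
  have hV1C : ContDiffOn ℝ (⊤ : ℕ∞) (fderiv ℝ V) Ω := hVC.fderiv_of_isOpen hΩopen (by simp)
  have hVyC : ContDiffOn ℝ (⊤ : ℕ∞) Vy Ω :=
    (ContinuousLinearMap.apply ℝ ℝ ((1 : ℝ), (0 : ℝ))).contDiff.comp_contDiffOn hV1C
  have hdiffOn : ∀ {G : ℝ × ℝ → ℝ}, ContDiffOn ℝ (⊤ : ℕ∞) G Ω → ∀ p ∈ Ω, DifferentiableAt ℝ G p := by
    intro G hG p hp
    exact ((hG.differentiableOn (by simp)) p hp).differentiableAt (hΩopen.mem_nhds hp)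
  have hFd : ∀ p ∈ Ω, DifferentiableAt ℝ F p := hdiffOn hFC
  have hVd : ∀ p ∈ Ω, DifferentiableAt ℝ V p := hdiffOn hVC
  have hWd : ∀ p ∈ Ω, DifferentiableAt ℝ W p := hdiffOn hWC
  have hVyd : ∀ p ∈ Ω, DifferentiableAt ℝ Vy p := hdiffOn hVyC
  have hF1d : ∀ p ∈ Ω, DifferentiableAt ℝ (fderiv ℝ F) p := by
    intro p hp
    exact ((hF1C.differentiableOn (by simp)) p hp).differentiableAt (hΩopen.mem_nhds hp)
  -- fderiv of V and W via second derivative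
  have hVfd : ∀ p ∈ Ω, fderiv ℝ V p =
      (ContinuousLinearMap.apply ℝ ℝ ((1 : ℝ), (0 : ℝ))).comp (fderiv ℝ (fderiv ℝ F) p) := by
    intro p hp
    exact (((ContinuousLinearMap.apply ℝ ℝ ((1 : ℝ), (0 : ℝ))).hasFDerivAt).comp p
      (hF1d p hp).hasFDerivAt).fderiv
  have hWfd : ∀ p ∈ Ω, fderiv ℝ W p =
      (ContinuousLinearMap.apply ℝ ℝ ((0 : ℝ), (1 : ℝ))).comp (fderiv ℝ (fderiv ℝ F) p) := by
    intro p hp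
    exact (((ContinuousLinearMap.apply ℝ ℝ ((0 : ℝ), (1 : ℝ))).hasFDerivAt).comp p
      (hF1d p hp).hasFDerivAt).fderiv
  -- Clairaut
  have hVtWy : ∀ p ∈ Ω, Vt p = Wy p := by
    intro p hp
    have hsymm : ∀ v w : ℝ × ℝ, fderiv ℝ (fderiv ℝ F) p v w = fderiv ℝ (fderiv ℝ F) p w v := by
      intro v w
      apply second_derivative_symmetric_of_eventually (f := F) (f' := fderiv ℝ F) (x := p)
      · filter_upwards [hΩopen.mem_nhds hp] with q hq
        exact (hFd q hq).hasFDerivAt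
      · exact (hF1d p hp).hasFDerivAt
    have e1 : Vt p = fderiv ℝ V p ((0 : ℝ), (1 : ℝ)) := rfl
    have e2 : Wy p = fderiv ℝ W p ((1 : ℝ), (0 : ℝ)) := rfl
    rw [e1, e2, hVfd p hp, hWfd p hp]
    simp only [ContinuousLinearMap.coe_comp', Function.comp_apply,
      ContinuousLinearMap.apply_apply]
    exact hsymm _ _
  -- P = V on Ω
  have hPV : ∀ p ∈ Ω, P p.1 p.2 = V p := by
    intro p hp
    have : fderivWithin ℝ F S p = fderiv ℝ F p :=
      fderivWithin_of_mem_nhds (mem_nhds_iff.2 ⟨Ω, hΩS, hΩopen, hp⟩)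
    show fderivWithin ℝ F S (p.1, p.2) ((1 : ℝ), (0 : ℝ)) = fderiv ℝ F p ((1 : ℝ), (0 : ℝ))
    rw [Prod.mk.eta, this]
  -- slice derivatives on Ω
  have hUy : ∀ y t : ℝ, (y, t) ∈ Ω → HasDerivAt (fun z => u z t) (V (y, t)) y :=
    fun y t hp => aux_hasDerivAt_fst (hFd _ hp)
  have hUt : ∀ y t : ℝ, (y, t) ∈ Ω → HasDerivAt (fun s => u y s) (W (y, t)) t :=
    fun y t hp => aux_hasDerivAt_snd (hFd _ hp)
  have hVy' : ∀ y t : ℝ, (y, t) ∈ Ω → HasDerivAt (fun z => V (z, t)) (Vy (y, t)) y :=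
    fun y t hp => aux_hasDerivAt_fst (hVd _ hp)
  have hVt' : ∀ y t : ℝ, (y, t) ∈ Ω → HasDerivAt (fun s => V (y, s)) (Vt (y, t)) t :=
    fun y t hp => aux_hasDerivAt_snd (hVd _ hp)
  have hWy' : ∀ y t : ℝ, (y, t) ∈ Ω → HasDerivAt (fun z => W (z, t)) (Wy (y, t)) y :=
    fun y t hp => aux_hasDerivAt_fst (hWd _ hp)
  have hVyy' : ∀ y t : ℝ, (y, t) ∈ Ω → HasDerivAt (fun z => Vy (z, t)) (Vyy (y, t)) y :=
    fun y t hp => aux_hasDerivAt_fst (hVyd _ hp)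
  -- PDE in V/W form and sign facts
  have hsinpos : ∀ y ∈ Set.Icc 0 h, ∀ t ∈ Set.Ico 0 T, 0 < Real.sin (u y t) := by
    intro y hy t ht
    have := hrange y hy t ht
    exact Real.sin_pos_of_pos_of_lt_pi this.1 (lt_of_le_of_lt this.2 (by linarith [pi_pos]))
  have hVpos : ∀ y t : ℝ, (y, t) ∈ Ω → 0 < V (y, t) := by
    intro y t hp
    rw [← hPV (y, t) hp]
    exact hPpos y ⟨hp.1.1, le_of_lt hp.1.2⟩ t ⟨le_of_lt hp.2.1, hp.2.2⟩
  have hPDE' : ∀ y t : ℝ, (y, t) ∈ Ω → W (y, t) =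
      Vy (y, t) / (1 + V (y, t) ^ 2) - ((n : ℝ) - 1) * Real.cos (u y t) / Real.sin (u y t) := by
    intro y t hp
    have hy : y ∈ Set.Ioo 0 h := hp.1
    have ht : t ∈ Set.Ioo 0 T := hp.2
    have e1 : deriv (fun s => u y s) t = W (y, t) := (hUt y t hp).deriv
    have e2 : deriv (fun z => u z t) y = V (y, t) := (hUy y t hp).deriv
    have e3 : deriv (deriv (fun z => u z t)) y = Vy (y, t) := by
      have hev : (deriv (fun z => u z t)) =ᶠ[𝓝 y] fun z => V (z, t) := by
        filter_upwards [Ioo_mem_nhds hy.1 hy.2] with z hz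
        exact (hUy z t ⟨hz, ht⟩).deriv
      rw [hev.deriv_eq]
      exact (hVy' y t hp).deriv
    have := hpde y hy t ht
    rw [e1, e2, e3] at this
    exact this
  -- differentiated PDE (Clairaut + chain rules)
  have hVtEq : ∀ y t : ℝ, (y, t) ∈ Ω → Vt (y, t) =
      (Vyy (y, t) * (1 + V (y, t) ^ 2) - Vy (y, t) * (2 * V (y, t) * Vy (y, t)))
        / (1 + V (y, t) ^ 2) ^ 2
      + ((n : ℝ) - 1) * V (y, t) / Real.sin (u y t) ^ 2 := by
    intro y t hp
    have hy : y ∈ Set.Ioo 0 h := hp.1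
    have ht : t ∈ Set.Ioo 0 T := hp.2
    rw [hVtWy (y, t) hp]
    -- W (·, t) agrees near y with the PDE right-hand side
    have hev : (fun z => W (z, t)) =ᶠ[𝓝 y] fun z =>
        Vy (z, t) / (1 + V (z, t) ^ 2)
          - ((n : ℝ) - 1) * Real.cos (u z t) / Real.sin (u z t) := by
      filter_upwards [Ioo_mem_nhds hy.1 hy.2] with z hz
      exact hPDE' z t ⟨hz, ht⟩
    -- derivative of the RHS at y
    have d1 : HasDerivAt (fun z => V (z, t)) (Vy (y, t)) y := hVy' y t hp
    have d2 : HasDerivAt (fun z => Vy (z, t)) (Vyy (y, t)) y := hVyy' y t hp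
    have d3 : HasDerivAt (fun z => u z t) (V (y, t)) y := hUy y t hp
    have hden : HasDerivAt (fun z => 1 + V (z, t) ^ 2) (2 * V (y, t) * Vy (y, t)) y := by
      have h' := ((d1.pow 2).const_add 1)
      norm_num at h'
      convert h'.const_add 1 using 1
      try ring
    have hdenne : (1 : ℝ) + V (y, t) ^ 2 ≠ 0 := by positivity
    have dq : HasDerivAt (fun z => Vy (z, t) / (1 + V (z, t) ^ 2))
        ((Vyy (y, t) * (1 + V (y, t) ^ 2) - Vy (y, t) * (2 * V (y, t) * Vy (y, t)))
          / (1 + V (y, t) ^ 2) ^ 2) y := d2.div hden hdenne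
    have dcos : HasDerivAt (fun z => Real.cos (u z t)) (-Real.sin (u y t) * V (y, t)) y :=
      d3.cos
    have dsin : HasDerivAt (fun z => Real.sin (u z t)) (Real.cos (u y t) * V (y, t)) y :=
      d3.sin
    have hsne : Real.sin (u y t) ≠ 0 :=
      ne_of_gt (hsinpos y (Ioo_subset_Icc_self hy) t (Ioo_subset_Ico_self ht))
    have dratio : HasDerivAt (fun z => Real.cos (u z t) / Real.sin (u z t))
        ((-Real.sin (u y t) * V (y, t) * Real.sin (u y t)
          - Real.cos (u y t) * (Real.cos (u y t) * V (y, t))) / Real.sin (u y t) ^ 2) y :=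
      dcos.div dsin hsne
    have dratio' : HasDerivAt (fun z => Real.cos (u z t) / Real.sin (u z t))
        (-(V (y, t) / Real.sin (u y t) ^ 2)) y := by
      have hpyth := Real.sin_sq_add_cos_sq (u y t)
      have hnum : -Real.sin (u y t) * V (y, t) * Real.sin (u y t)
          - Real.cos (u y t) * (Real.cos (u y t) * V (y, t)) = -V (y, t) := by
        linear_combination (-(V (y, t))) * hpyth
      have hval : (-Real.sin (u y t) * V (y, t) * Real.sin (u y t)
          - Real.cos (u y t) * (Real.cos (u y t) * V (y, t))) / Real.sin (u y t) ^ 2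
          = -(V (y, t) / Real.sin (u y t) ^ 2) := by
        rw [hnum, neg_div]
      rw [← hval]
      exact dratio
    have dRHS : HasDerivAt (fun z =>
        Vy (z, t) / (1 + V (z, t) ^ 2)
          - ((n : ℝ) - 1) * Real.cos (u z t) / Real.sin (u z t))
        ((Vyy (y, t) * (1 + V (y, t) ^ 2) - Vy (y, t) * (2 * V (y, t) * Vy (y, t)))
          / (1 + V (y, t) ^ 2) ^ 2
          + ((n : ℝ) - 1) * V (y, t) / Real.sin (u y t) ^ 2) y := by
      have := dq.sub (dratio'.const_mul ((n : ℝ) - 1))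
      have heq : ∀ z : ℝ, ((n : ℝ) - 1) * (Real.cos (u z t) / Real.sin (u z t))
          = ((n : ℝ) - 1) * Real.cos (u z t) / Real.sin (u z t) := by
        intro z; ring
      simp only [heq] at this
      exact this.congr_deriv (by ring)
    have : HasDerivAt (fun z => W (z, t))
        ((Vyy (y, t) * (1 + V (y, t) ^ 2) - Vy (y, t) * (2 * V (y, t) * Vy (y, t)))
          / (1 + V (y, t) ^ 2) ^ 2
          + ((n : ℝ) - 1) * V (y, t) / Real.sin (u y t) ^ 2) y :=
      dRHS.congr_of_eventuallyEq hev
    exact HasDerivAt.unique (hWy' y t hp) this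
  -- positivity of lam etc.
  have hha : 0 < h - a := by linarith [ha.2]
  have hlampos : 0 < lam := by rw [hlam]; positivity
  have hlamh : lam * (h - a) = π := by rw [hlam]; field_simp
  -- THE MAXIMUM PRINCIPLE
  have hmain : ∀ y ∈ Set.Icc a h, ∀ t ∈ Set.Ico 0 T,
      ε * Real.exp (-lam ^ 2 * t) * Real.sin (lam * (y - a)) ≤ Real.arctan (P y t) := by
    intro y hy t ht
    rcases eq_or_lt_of_le ht.1 with h0 | h0
    · -- t = 0
      rw [← h0]
      have : ε * Real.exp (-lam ^ 2 * 0) * Real.sin (lam * (y - a)) ≤ ε := by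
        rw [show -lam ^ 2 * 0 = 0 by ring, Real.exp_zero, mul_one]
        calc ε * Real.sin (lam * (y - a)) ≤ ε * 1 :=
              mul_le_mul_of_nonneg_left (Real.sin_le_one _) (le_of_lt hεpos)
          _ = ε := mul_one ε
      exact le_trans this (hεle y hy)
    · -- 0 < t
      set g : ℝ × ℝ → ℝ := fun p =>
        Real.arctan (P p.1 p.2) - ε * Real.exp (-lam ^ 2 * p.2) * Real.sin (lam * (p.1 - a))
        with hgdef
      set K : Set (ℝ × ℝ) := Set.Icc a h ×ˢ Set.Icc 0 t with hKdef
      have hKS : K ⊆ S := Set.prod_mono (Set.Icc_subset_Icc (le_of_lt ha.1) le_rfl)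
        (Set.Icc_subset_Ico_right ht.2)
      have hφcont : Continuous (fun p : ℝ × ℝ =>
          ε * Real.exp (-lam ^ 2 * p.2) * Real.sin (lam * (p.1 - a))) :=
        ((continuous_const.mul (Real.continuous_exp.comp (continuous_const.mul continuous_snd))).mul
          (Real.continuous_sin.comp (continuous_const.mul (continuous_fst.sub continuous_const))))
      have hgc : ContinuousOn g K :=
        ((Real.continuous_arctan.comp_continuousOn hPcont).mono hKS).sub hφcont.continuousOn
      have hKcpt : IsCompact K := isCompact_Icc.prod isCompact_Icc
      have hKne : K.Nonempty := ⟨(a, 0), ⟨Set.left_mem_Icc.2 (le_of_lt hah),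
        Set.left_mem_Icc.2 (le_of_lt h0)⟩⟩
      obtain ⟨p₀, hp₀K, hminOn⟩ := hKcpt.exists_isMinOn hKne hgc
      have hmin' : ∀ q ∈ K, g p₀ ≤ g q := fun q hq => hminOn hq
      obtain ⟨y₀, t₀⟩ := p₀
      have hy₀ : y₀ ∈ Set.Icc a h := hp₀K.1
      have ht₀ : t₀ ∈ Set.Icc 0 t := hp₀K.2
      have hytK : ((y, t) : ℝ × ℝ) ∈ K := ⟨hy, ⟨ht.1, le_rfl⟩⟩
      suffices h0g : 0 ≤ g (y₀, t₀) by
        have := hmin' (y, t) hytK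
        have hgyt : g (y, t) =
            Real.arctan (P y t) - ε * Real.exp (-lam ^ 2 * t) * Real.sin (lam * (y - a)) := rfl
        linarith [this, h0g]
      by_contra hcon
      push_neg at hcon
      -- boundary cases give nonnegativity, contradiction forces interior point
      have ht₀T : t₀ < T := lt_of_le_of_lt ht₀.2 ht.2
      have hy₀a : a < y₀ := by
        rcases eq_or_lt_of_le hy₀.1 with he | hl
        · exfalso
          have : Real.sin (lam * (y₀ - a)) = 0 := by rw [← he]; simp
          have hg0 : g (y₀, t₀) = Real.arctan (P y₀ t₀) := by
            simp only [hgdef, this]; ring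
          have hpos : 0 < Real.arctan (P y₀ t₀) := by
            have := Real.arctan_strictMono
              (hPpos y₀ (hsub hy₀) t₀ ⟨ht₀.1, ht₀T⟩)
            rwa [Real.arctan_zero] at this
          rw [hg0] at hcon; linarith
        · exact hl
      have hy₀h : y₀ < h := by
        rcases eq_or_lt_of_le hy₀.2 with he | hl
        · exfalso
          have : Real.sin (lam * (y₀ - a)) = 0 := by rw [he, hlamh, Real.sin_pi]
          have hg0 : g (y₀, t₀) = Real.arctan (P y₀ t₀) := by
            simp only [hgdef, this]; ring
          have hpos : 0 < Real.arctan (P y₀ t₀) := by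
            have := Real.arctan_strictMono
              (hPpos y₀ (hsub hy₀) t₀ ⟨ht₀.1, ht₀T⟩)
            rwa [Real.arctan_zero] at this
          rw [hg0] at hcon; linarith
        · exact hl
      have ht₀0 : 0 < t₀ := by
        rcases eq_or_lt_of_le ht₀.1 with he | hl
        · exfalso
          have hg0 : g (y₀, t₀) =
              Real.arctan (P y₀ t₀) - ε * Real.sin (lam * (y₀ - a)) := by
            simp only [hgdef, ← he]
            rw [show -lam ^ 2 * 0 = 0 by ring, Real.exp_zero, mul_one]
          have h1 : ε * Real.sin (lam * (y₀ - a)) ≤ ε := by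
            calc ε * Real.sin (lam * (y₀ - a)) ≤ ε * 1 :=
                  mul_le_mul_of_nonneg_left (Real.sin_le_one _) (le_of_lt hεpos)
              _ = ε := mul_one ε
          have h2 : ε ≤ Real.arctan (P y₀ 0) := hεle y₀ hy₀
          rw [hg0, ← he] at hcon
          linarith
        · exact hl
      -- interior point
      have hp₀Ω : ((y₀, t₀) : ℝ × ℝ) ∈ Ω := ⟨⟨lt_trans ha.1 hy₀a, hy₀h⟩, ⟨ht₀0, ht₀T⟩⟩
      have hgΩeq : ∀ z s : ℝ, (z, s) ∈ Ω → g (z, s) =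
          Real.arctan (V (z, s)) - ε * Real.exp (-lam ^ 2 * s) * Real.sin (lam * (z - a)) := by
        intro z s hzs
        simp only [hgdef]
        rw [hPV (z, s) hzs]
      -- (i) temporal derivative at the minimum is ≤ 0
      have hGd : HasDerivAt
          (fun s => Real.arctan (V (y₀, s)) - ε * Real.exp (-lam ^ 2 * s) * Real.sin (lam * (y₀ - a)))
          (1 / (1 + V (y₀, t₀) ^ 2) * Vt (y₀, t₀)
            - ε * (Real.exp (-lam ^ 2 * t₀) * (-lam ^ 2)) * Real.sin (lam * (y₀ - a))) t₀ := by
        have h1 : HasDerivAt (fun s => Real.arctan (V (y₀, s)))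
            (1 / (1 + V (y₀, t₀) ^ 2) * Vt (y₀, t₀)) t₀ :=
          (hVt' y₀ t₀ hp₀Ω).arctan
        have h2 : HasDerivAt (fun s : ℝ => Real.exp (-lam ^ 2 * s))
            (Real.exp (-lam ^ 2 * t₀) * (-lam ^ 2)) t₀ := by
          have hlin : HasDerivAt (fun s : ℝ => -lam ^ 2 * s) (-lam ^ 2) t₀ := by
            simpa using (hasDerivAt_id t₀).const_mul (-lam ^ 2)
          exact (Real.hasDerivAt_exp _).comp t₀ hlin
        exact h1.sub (((h2.const_mul ε)).mul_const _)
      have hminL : ∀ᶠ s in 𝓝[<] t₀,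
          (fun s => Real.arctan (V (y₀, s))
            - ε * Real.exp (-lam ^ 2 * s) * Real.sin (lam * (y₀ - a))) t₀ ≤
          (fun s => Real.arctan (V (y₀, s))
            - ε * Real.exp (-lam ^ 2 * s) * Real.sin (lam * (y₀ - a))) s := by
        filter_upwards [Ioo_mem_nhdsLT_of_mem (⟨ht₀0, le_rfl⟩ : t₀ ∈ Set.Ioc 0 t₀)]
          with s hs
        have hsΩ : ((y₀, s) : ℝ × ℝ) ∈ Ω :=
          ⟨⟨lt_trans ha.1 hy₀a, hy₀h⟩, ⟨hs.1, lt_trans hs.2 ht₀T⟩⟩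
        have hsK : ((y₀, s) : ℝ × ℝ) ∈ K := ⟨hy₀, ⟨le_of_lt hs.1, le_trans (le_of_lt hs.2) ht₀.2⟩⟩
        have e1 := hgΩeq y₀ t₀ hp₀Ω
        have e2 := hgΩeq y₀ s hsΩ
        have := hmin' (y₀, s) hsK
        simp only [← e1, ← e2]
        exact this
      have hGle := deriv_nonpos_of_min_left hGd hminL
      -- (ii) spatial: second derivative at interior min is ≥ 0
      have hsinD : ∀ z : ℝ, HasDerivAt (fun w => Real.sin (lam * (w - a)))
          (Real.cos (lam * (z - a)) * lam) z := by
        intro z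
        have hlin : HasDerivAt (fun w : ℝ => lam * (w - a)) lam z := by
          simpa using ((hasDerivAt_id z).sub_const a).const_mul lam
        exact (Real.hasDerivAt_sin _).comp z hlin
      have hcosD : HasDerivAt (fun z => Real.cos (lam * (z - a)) * lam)
          (-Real.sin (lam * (y₀ - a)) * lam * lam) y₀ := by
        have hlin : HasDerivAt (fun w : ℝ => lam * (w - a)) lam y₀ := by
          simpa using ((hasDerivAt_id y₀).sub_const a).const_mul lam
        exact ((Real.hasDerivAt_cos _).comp y₀ hlin).mul_const lam
      have hev' : ∀ᶠ z in 𝓝 y₀, HasDerivAt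
          (fun w => Real.arctan (V (w, t₀))
            - ε * Real.exp (-lam ^ 2 * t₀) * Real.sin (lam * (w - a)))
          ((fun w => Vy (w, t₀) / (1 + V (w, t₀) ^ 2)
            - ε * Real.exp (-lam ^ 2 * t₀) * (Real.cos (lam * (w - a)) * lam)) z) z := by
        filter_upwards [Ioo_mem_nhds (lt_trans ha.1 hy₀a) hy₀h] with z hz
        have hzΩ : ((z, t₀) : ℝ × ℝ) ∈ Ω := ⟨hz, ⟨ht₀0, ht₀T⟩⟩
        have h1 : HasDerivAt (fun w => Real.arctan (V (w, t₀)))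
            (1 / (1 + V (z, t₀) ^ 2) * Vy (z, t₀)) z :=
          (hVy' z t₀ hzΩ).arctan
        have h2 := (hsinD z).const_mul (ε * Real.exp (-lam ^ 2 * t₀))
        have h3 := h1.sub h2
        exact h3.congr_deriv (by ring)
      have h2d : HasDerivAt (fun w => Vy (w, t₀) / (1 + V (w, t₀) ^ 2)
            - ε * Real.exp (-lam ^ 2 * t₀) * (Real.cos (lam * (w - a)) * lam))
          ((Vyy (y₀, t₀) * (1 + V (y₀, t₀) ^ 2)
            - Vy (y₀, t₀) * (2 * V (y₀, t₀) * Vy (y₀, t₀))) / (1 + V (y₀, t₀) ^ 2) ^ 2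
            - ε * Real.exp (-lam ^ 2 * t₀) * (-Real.sin (lam * (y₀ - a)) * lam * lam)) y₀ := by
        have d1 : HasDerivAt (fun z => V (z, t₀)) (Vy (y₀, t₀)) y₀ := hVy' y₀ t₀ hp₀Ω
        have d2 : HasDerivAt (fun z => Vy (z, t₀)) (Vyy (y₀, t₀)) y₀ := hVyy' y₀ t₀ hp₀Ω
        have hden : HasDerivAt (fun z => 1 + V (z, t₀) ^ 2)
            (2 * V (y₀, t₀) * Vy (y₀, t₀)) y₀ := by
          have h' := (d1.pow 2).const_add 1
          norm_num at h'
          convert h'.const_add 1 using 1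
          try ring
        have hdenne : (1 : ℝ) + V (y₀, t₀) ^ 2 ≠ 0 := by positivity
        have dq := d2.div hden hdenne
        have dφ := hcosD.const_mul (ε * Real.exp (-lam ^ 2 * t₀))
        exact dq.sub dφ
      have hlocmin : IsLocalMin (fun w => Real.arctan (V (w, t₀))
          - ε * Real.exp (-lam ^ 2 * t₀) * Real.sin (lam * (w - a))) y₀ := by
        have : ∀ᶠ z in 𝓝 y₀,
            (fun w => Real.arctan (V (w, t₀))
              - ε * Real.exp (-lam ^ 2 * t₀) * Real.sin (lam * (w - a))) y₀ ≤
            (fun w => Real.arctan (V (w, t₀))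
              - ε * Real.exp (-lam ^ 2 * t₀) * Real.sin (lam * (w - a))) z := by
          filter_upwards [Ioo_mem_nhds hy₀a hy₀h] with z hz
          have hzΩ : ((z, t₀) : ℝ × ℝ) ∈ Ω := ⟨⟨lt_trans ha.1 hz.1, hz.2⟩, ⟨ht₀0, ht₀T⟩⟩
          have hzK : ((z, t₀) : ℝ × ℝ) ∈ K := ⟨⟨le_of_lt hz.1, le_of_lt hz.2⟩, ht₀⟩
          have e1 := hgΩeq y₀ t₀ hp₀Ω
          have e2 := hgΩeq z t₀ hzΩ
          have hm := hmin' (z, t₀) hzK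
          rw [e1, e2] at hm
          exact hm
        exact this
      have h2pos := snd_deriv_nonneg_of_isLocalMin hev' h2d hlocmin
      -- (iii) combine: contradiction
      have hApos : (0 : ℝ) < 1 + V (y₀, t₀) ^ 2 := by positivity
      have hA1 : (1 : ℝ) ≤ 1 + V (y₀, t₀) ^ 2 := by nlinarith [sq_nonneg (V (y₀, t₀))]
      have hVq : 0 < V (y₀, t₀) := hVpos y₀ t₀ hp₀Ω
      have hsinq : 0 < Real.sin (u y₀ t₀) :=
        hsinpos y₀ ⟨le_of_lt (lt_trans ha.1 hy₀a), le_of_lt hy₀h⟩ t₀ ⟨le_of_lt ht₀0, ht₀T⟩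
      have hΦ0 : 0 ≤ ε * Real.exp (-lam ^ 2 * t₀) * Real.sin (lam * (y₀ - a)) := by
        apply mul_nonneg (mul_nonneg (le_of_lt hεpos) (Real.exp_nonneg _))
        apply Real.sin_nonneg_of_nonneg_of_le_pi
        · exact mul_nonneg (le_of_lt hlampos) (by linarith)
        · calc lam * (y₀ - a) ≤ lam * (h - a) :=
                mul_le_mul_of_nonneg_left (by linarith) (le_of_lt hlampos)
            _ = π := hlamh
      have hCpos : 0 < ((n : ℝ) - 1) * V (y₀, t₀) / Real.sin (u y₀ t₀) ^ 2 := by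
        have hn1 : (1 : ℝ) ≤ (n : ℝ) - 1 := by
          have : (2 : ℝ) ≤ (n : ℝ) := by exact_mod_cast hn
          linarith
        exact div_pos (mul_pos (by linarith) hVq) (by positivity)
      have hVtval := hVtEq y₀ t₀ hp₀Ω
      set A := 1 + V (y₀, t₀) ^ 2 with hAdef
      set Θ := (Vyy (y₀, t₀) * A - Vy (y₀, t₀) * (2 * V (y₀, t₀) * Vy (y₀, t₀))) / A ^ 2
        with hΘdef
      set Φ := ε * Real.exp (-lam ^ 2 * t₀) * Real.sin (lam * (y₀ - a)) with hΦdef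
      set C := ((n : ℝ) - 1) * V (y₀, t₀) / Real.sin (u y₀ t₀) ^ 2 with hCdef
      -- hGle : 1/A * Vt − ε*(exp*(−lam²))*sin ≤ 0 ⇒ Vt/A + lam²Φ ≤ 0
      have hGid : 1 / A * Vt (y₀, t₀)
          - ε * (Real.exp (-lam ^ 2 * t₀) * (-lam ^ 2)) * Real.sin (lam * (y₀ - a))
          = Vt (y₀, t₀) / A + lam ^ 2 * Φ := by
        rw [hΦdef]; ring
      have hGle2 : Vt (y₀, t₀) / A + lam ^ 2 * Φ ≤ 0 := by
        rw [← hGid]; exact hGle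
      -- h2pos : 0 ≤ Θ − ε*exp*(−sin*lam*lam) = Θ + lam²Φ
      have hHid : Θ - ε * Real.exp (-lam ^ 2 * t₀) * (-Real.sin (lam * (y₀ - a)) * lam * lam)
          = Θ + lam ^ 2 * Φ := by
        rw [hΦdef]; ring
      have h2pos2 : 0 ≤ Θ + lam ^ 2 * Φ := by
        rw [← hHid]; exact h2pos
      have hVt2 : Vt (y₀, t₀) = Θ + C := hVtval
      have hdivle : Vt (y₀, t₀) ≤ (-(lam ^ 2 * Φ)) * A := by
        have h1 : Vt (y₀, t₀) / A ≤ -(lam ^ 2 * Φ) := by linarith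
        exact (div_le_iff₀ hApos).1 h1
      have hprod : 0 ≤ lam ^ 2 * Φ * (A - 1) :=
        mul_nonneg (mul_nonneg (sq_nonneg lam) hΦ0) (by linarith)
      have hid2 : (-(lam ^ 2 * Φ)) * A = -(lam ^ 2 * Φ * (A - 1)) - lam ^ 2 * Φ := by ring
      -- Θ + C ≤ −lam²Φ·A, Θ ≥ −lam²Φ ⇒ C ≤ −lam²Φ(A−1) ≤ 0, contradiction
      linarith [hdivle, h2pos2, hCpos, hprod, hid2, hVt2.le, hVt2.ge]
  -- translate the comparison into the gradient bound
  have hpart2 : ∀ y ∈ Set.Icc a h, ∀ t ∈ Set.Ico 0 T,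
      ε * Real.exp (-lam ^ 2 * t) * Real.sin (lam * (y - a)) ≤ P y t := by
    intro y hy t ht
    have hφle := hmain y hy t ht
    set φv := ε * Real.exp (-lam ^ 2 * t) * Real.sin (lam * (y - a)) with hφv
    by_cases hφ : φv ≤ 0
    · exact le_trans hφ (le_of_lt (hPpos y (hsub hy) t ht))
    · push_neg at hφ
      have harc : Real.arctan (P y t) < π / 2 := Real.arctan_lt_pi_div_two _
      have hφlt : φv < π / 2 := lt_of_le_of_lt hφle harc
      have h1 : φv ≤ Real.tan φv := Real.le_tan (le_of_lt hφ) hφlt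
      have h2 : Real.tan φv ≤ Real.tan (Real.arctan (P y t)) := by
        rcases eq_or_lt_of_le hφle with he | hl
        · rw [he]
        · exact le_of_lt (Real.strictMonoOn_tan
            ⟨by linarith [Real.pi_pos], hφlt⟩
            ⟨Real.neg_pi_div_two_lt_arctan _, harc⟩ hl)
      rw [Real.tan_arctan] at h2
      linarith
  refine ⟨hεpos, ?_, ?_⟩
  · intro y hy t ht
    rw [ge_iff_le, hL2' y (hsub hy) t ht]
    exact hpart2 y hy t ht
  · intro t ht
    -- FTC on [a, h]
    have hder : ∀ y ∈ Set.uIcc a h, HasDerivAt (fun z => u z t) (P y t) y := by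
      rw [Set.uIcc_of_le (le_of_lt hah)]
      exact fun y hy => hL2 y (hsub hy) t ht
    have hPcont' : ContinuousOn (fun y => P y t) (Set.uIcc a h) := by
      rw [Set.uIcc_of_le (le_of_lt hah)]
      have hmap : Set.MapsTo (fun y : ℝ => ((y, t) : ℝ × ℝ)) (Set.Icc a h) S :=
        fun y hy => ⟨⟨le_of_lt (lt_of_lt_of_le ha.1 hy.1), hy.2⟩, ht⟩
      exact hPcont.comp ((continuous_id.prodMk continuous_const).continuousOn) hmap
    have hint1 : IntervalIntegrable (fun y => P y t) MeasureTheory.volume a h :=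
      hPcont'.intervalIntegrable
    have hFTC : ∫ y in a..h, P y t = u h t - u a t :=
      intervalIntegral.integral_eq_sub_of_hasDerivAt hder hint1
    -- the explicit integral of the subsolution
    have hφder : ∀ y ∈ Set.uIcc a h,
        HasDerivAt (fun w => -(ε * Real.exp (-lam ^ 2 * t) / lam) * Real.cos (lam * (w - a)))
          (ε * Real.exp (-lam ^ 2 * t) * Real.sin (lam * (y - a))) y := by
      intro y _
      have hlin : HasDerivAt (fun w : ℝ => lam * (w - a)) lam y := by
        simpa using ((hasDerivAt_id y).sub_const a).const_mul lam
      have hd := ((Real.hasDerivAt_cos _).comp y hlin).const_mul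
        (-(ε * Real.exp (-lam ^ 2 * t) / lam))
      exact hd.congr_deriv (by field_simp)
    have hφcont2 : Continuous (fun y : ℝ => ε * Real.exp (-lam ^ 2 * t) * Real.sin (lam * (y - a))) :=
      continuous_const.mul (Real.continuous_sin.comp
        (continuous_const.mul (continuous_id.sub continuous_const)))
    have hφint : IntervalIntegrable
        (fun y : ℝ => ε * Real.exp (-lam ^ 2 * t) * Real.sin (lam * (y - a)))
        MeasureTheory.volume a h := hφcont2.intervalIntegrable a h
    have hφval : ∫ y in a..h, ε * Real.exp (-lam ^ 2 * t) * Real.sin (lam * (y - a))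
        = 2 * ε / lam * Real.exp (-lam ^ 2 * t) := by
      rw [intervalIntegral.integral_eq_sub_of_hasDerivAt hφder hφint]
      rw [show lam * (h - a) = π from hlamh, show lam * (a - a) = 0 by ring,
        Real.cos_pi, Real.cos_zero]
      field_simp
      ring
    have hmono : ∫ y in a..h, ε * Real.exp (-lam ^ 2 * t) * Real.sin (lam * (y - a))
        ≤ ∫ y in a..h, P y t := by
      apply intervalIntegral.integral_mono_on (le_of_lt hah) hφint hint1
      intro y hy
      exact hpart2 y hy t ht
    rw [hφval, hFTC] at hmono
    constructor
    · exact hmono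
    · have := htop t ht
      linarith
end

section
/- Let n ≥ 2 be an integer, a ∈ (0, π/4), μ := −π/(2·ln(tan(a/2))) (note μ > 0 since tan(a/2) < 1), ω > 0 and ε₁ > 0. Define φ(x,t) := −μ·ln(tan(x/2)) + ω·cos(x)/ln(t) + ε₁ for x ∈ [a, π/2] and t ≥ 2. Then for all x ∈ [a, π/2] and t ≥ 2: (i) ∂_x φ(x,t) = −μ/sin x − ω·sin x/ln t < 0; and (ii) for every real P ≥ 1, ∂_t φ − (n−1)·(cos x/sin x)·∂_x φ − (1/P)·∂_{xx} φ ≥ 0. -/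
open Real Set

/-!
Both claims are pointwise computations. Since `d/dx ln tan(x/2) = 1/sin x`, the `x`-derivative is
`-μ/sin x - ω sin x/ln t`, negative because `μ > 0` (as `tan(a/2) < 1`). With `m = n - 1 ≥ 1`,
the supersolution expression regroups as
`μ cos x (m - 1/P)/sin² x + (ω cos x/ln t)(m + 1/P - 1/(t ln t))`,
and both terms are nonnegative on `[a, π/2] × [2, ∞)` because `cos x ≥ 0`, `P ≥ 1` and
`t ln t ≥ 2 ln 2 > 1`.
-/

lemma log_tan_half_neg {a : ℝ} (ha0 : 0 < a) (ha : a < π / 2) : log (tan (a / 2)) < 0 := by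
  have htan_pos : 0 < tan (a / 2) := tan_pos_of_pos_of_lt_pi_div_two (by linarith) (by linarith)
  have htan_lt_one : tan (a / 2) < 1 := by
    simpa [tan_pi_div_four] using
      tan_lt_tan_of_lt_of_lt_pi_div_two (x := a / 2) (y := π / 4)
        (by linarith) (by linarith) (by linarith)
  exact log_neg htan_pos htan_lt_one

lemma one_le_mul_log_of_two_le {t : ℝ} (ht : 2 ≤ t) : 1 ≤ t * log t := by
  have hlog : log 2 ≤ log t := log_le_log (by norm_num) ht
  nlinarith [log_two_gt_d9]

lemma hasDerivAt_log_tan_half {y : ℝ} (hy : y ∈ Ioo 0 π) :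
    HasDerivAt (fun x => log (tan (x / 2))) (1 / sin y) y := by
  obtain ⟨hy0, hyπ⟩ := hy
  have hcos : 0 < cos (y / 2) := cos_pos_of_mem_Ioo ⟨by linarith, by linarith⟩
  have hsin : 0 < sin (y / 2) := sin_pos_of_pos_of_lt_pi (by linarith) (by linarith)
  have htan : HasDerivAt (fun x => tan (x / 2)) (1 / cos (y / 2) ^ 2 * (1 / 2)) y :=
    (hasDerivAt_tan hcos.ne').comp (h := fun x => x / 2) y ((hasDerivAt_id' y).div_const 2)
  refine (htan.log (tan_pos_of_pos_of_lt_pi_div_two (by linarith) (by linarith)).ne').congr_deriv ?_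
  have hsin_double : sin y = 2 * sin (y / 2) * cos (y / 2) := by
    rw [← sin_two_mul]; ring_nf
  rw [tan_eq_sin_div_cos, hsin_double]
  field_simp

lemma hasDerivAt_div_log {k t : ℝ} (ht0 : 0 < t) (ht1 : t ≠ 1) :
    HasDerivAt (fun s => k / log s) (-k / (t * log t ^ 2)) t := by
  have hlog : log t ≠ 0 := log_ne_zero_of_pos_of_ne_one ht0 ht1
  refine ((hasDerivAt_const t k).div (hasDerivAt_log ht0.ne') hlog).congr_deriv ?_
  field_simp
  ring

section SpatialProfile

variable (μ ω c L : ℝ)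

lemma hasDerivAt_supersolution_profile {y : ℝ} (hy : y ∈ Ioo 0 π) :
    HasDerivAt (fun x => -μ * log (tan (x / 2)) + ω * cos x / L + c)
      (-μ / sin y - ω * sin y / L) y := by
  refine ((((hasDerivAt_log_tan_half hy).const_mul (-μ)).add
    (((hasDerivAt_cos y).const_mul ω).div_const L)).add_const c).congr_deriv ?_
  ring

lemma deriv_deriv_supersolution_profile {y : ℝ} (hy : y ∈ Ioo 0 π) :
    deriv (deriv fun x => -μ * log (tan (x / 2)) + ω * cos x / L + c) y
      = μ * cos y / sin y ^ 2 - ω * cos y / L := by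
  have hderiv : deriv (fun x => -μ * log (tan (x / 2)) + ω * cos x / L + c)
      =ᶠ[nhds y] fun x => -μ / sin x - ω * sin x / L := by
    filter_upwards [isOpen_Ioo.mem_nhds hy] with x hx
    exact (hasDerivAt_supersolution_profile μ ω c L hx).deriv
  have hsin : sin y ≠ 0 := (sin_pos_of_pos_of_lt_pi hy.1 hy.2).ne'
  rw [hderiv.deriv_eq]
  refine (((hasDerivAt_const y (-μ)).div (hasDerivAt_sin y) hsin).sub
    (((hasDerivAt_sin y).const_mul ω).div_const L)).deriv.trans ?_
  ring

end SpatialProfile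

lemma supersolution_inequality {μ ω m P s c t L : ℝ} (hμ : 0 ≤ μ) (hω : 0 ≤ ω)
    (hc : 0 ≤ c) (hs : 0 < s) (hL : 0 < L) (htL : 1 ≤ t * L) (hm : 1 ≤ m) (hP : 1 ≤ P) :
    0 ≤ -ω * c / (t * L ^ 2) - m * (c / s) * (-μ / s - ω * s / L)
      - 1 / P * (μ * c / s ^ 2 - ω * c / L) := by
  have ht : 0 < t := pos_of_mul_pos_left (by linarith) hL.le
  have hP0 : 0 < P := by linarith
  have hregroup : -ω * c / (t * L ^ 2) - m * (c / s) * (-μ / s - ω * s / L)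
      - 1 / P * (μ * c / s ^ 2 - ω * c / L)
      = μ * c / s ^ 2 * (m - 1 / P) + ω * c / L * (m + 1 / P - 1 / (t * L)) := by
    field_simp
    ring
  have hP_inv : 1 / P ≤ 1 := (div_le_one hP0).mpr hP
  have htL_inv : 1 / (t * L) ≤ 1 := (div_le_one (by positivity)).mpr htL
  rw [hregroup]
  apply add_nonneg
  · exact mul_nonneg (by positivity) (by linarith)
  · exact mul_nonneg (by positivity) (by linarith [one_div_pos.mpr hP0])

theorem explicit_supersolution_gradient_estimate_general
    (n : ℕ) (hn : 2 ≤ n) (a : ℝ) (ha : a ∈ Set.Ioo 0 (π / 4))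
    (μ ω ε₁ : ℝ) (hμ : μ = -π / (2 * Real.log (Real.tan (a / 2))))
    (hω : 0 < ω)
    (φ : ℝ → ℝ → ℝ)
    (hφ : ∀ x t, φ x t = -μ * Real.log (Real.tan (x / 2))
      + ω * Real.cos x / Real.log t + ε₁) :
    ∀ x ∈ Set.Icc a (π / 2), ∀ t : ℝ, 2 ≤ t →
      (deriv (fun x' => φ x' t) x = -μ / Real.sin x - ω * Real.sin x / Real.log t ∧
        deriv (fun x' => φ x' t) x < 0) ∧
      (∀ P : ℝ, 1 ≤ P →
        deriv (fun s => φ x s) t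
          - ((n : ℝ) - 1) * (Real.cos x / Real.sin x) * deriv (fun x' => φ x' t) x
          - (1 / P) * deriv (deriv (fun x' => φ x' t)) x ≥ 0) := by
  intro x ⟨hax, hx⟩ t ht
  have hμ0 : 0 < μ := hμ ▸ div_pos_of_neg_of_neg (by linarith [pi_pos])
    (by linarith [log_tan_half_neg ha.1 (by linarith [ha.2, pi_pos])])
  have hx_mem : x ∈ Ioo 0 π := ⟨by linarith [ha.1], by linarith [pi_pos]⟩
  have hsin : 0 < sin x := sin_pos_of_pos_of_lt_pi hx_mem.1 hx_mem.2
  have hcos : 0 ≤ cos x := cos_nonneg_of_mem_Icc ⟨by linarith [hx_mem.1, pi_pos], hx⟩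
  have hL : 0 < log t := log_pos (by linarith)
  have hm : (1 : ℝ) ≤ n - 1 := by linarith [show (2 : ℝ) ≤ n by exact_mod_cast hn]
  have hφ_space : (fun x' => φ x' t)
      = fun x' => -μ * log (tan (x' / 2)) + ω * cos x' / log t + ε₁ :=
    funext fun x' => hφ x' t
  have hφ_time : (fun s => φ x s)
      = fun s => -μ * log (tan (x / 2)) + ω * cos x / log s + ε₁ := funext fun s => hφ x s
  have hdx := (hasDerivAt_supersolution_profile μ ω ε₁ (log t) hx_mem).deriv
  have hdt : deriv (fun s => φ x s) t = -(ω * cos x) / (t * log t ^ 2) := by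
    rw [hφ_time]
    exact (((hasDerivAt_div_log (by linarith) (by linarith)).const_add _).add_const ε₁).deriv
  rw [hφ_space, hdx, deriv_deriv_supersolution_profile μ ω ε₁ (log t) hx_mem, hdt]
  refine ⟨⟨rfl, ?_⟩, fun P hP => ?_⟩
  · have := div_pos hμ0 hsin
    have := div_pos (mul_pos hω hsin) hL
    linarith [neg_div (sin x) μ]
  · rw [neg_mul_eq_neg_mul]
    exact supersolution_inequality hμ0.le hω.le hcos hsin hL (one_le_mul_log_of_two_le ht) hm hP

/-- The explicit supersolution `φ(x,t) = −μ ln(tan(x/2)) + ω cos x/ln t + ε₁`, with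
`μ = −π/(2 ln(tan(a/2)))`, satisfies on `[a, π/2] × [2, ∞)`:
(i) `∂_x φ = −μ/sin x − ω sin x/ln t < 0`, and
(ii) `∂_t φ − (n−1)(cos x/sin x)∂_x φ − (1/P)∂_{xx} φ ≥ 0` for every `P ≥ 1`. -/
theorem explicit_supersolution_gradient_estimate
    (n : ℕ) (hn : 2 ≤ n) (a : ℝ) (ha : a ∈ Set.Ioo 0 (π / 4))
    (μ ω ε₁ : ℝ) (hμ : μ = -π / (2 * Real.log (Real.tan (a / 2))))
    (hω : 0 < ω) (hε₁ : 0 < ε₁)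
    (φ : ℝ → ℝ → ℝ)
    (hφ : ∀ x t, φ x t = -μ * Real.log (Real.tan (x / 2))
      + ω * Real.cos x / Real.log t + ε₁) :
    ∀ x ∈ Set.Icc a (π / 2), ∀ t : ℝ, 2 ≤ t →
      (deriv (fun x' => φ x' t) x = -μ / Real.sin x - ω * Real.sin x / Real.log t ∧
        deriv (fun x' => φ x' t) x < 0) ∧
      (∀ P : ℝ, 1 ≤ P →
        deriv (fun s => φ x s) t
          - ((n : ℝ) - 1) * (Real.cos x / Real.sin x) * deriv (fun x' => φ x' t) x
          - (1 / P) * deriv (deriv (fun x' => φ x' t)) x ≥ 0) :=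
  explicit_supersolution_gradient_estimate_general n hn a ha μ ω ε₁ hμ hω φ hφ
end
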